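/- arXiv:2212.12013 — 6 statements merged into one kernel-verified Lean document; each statement's English description precedes it below -/
import Mathlib

section
/- Let h be holomorphic near 0 in ℂ (or a branch of an algebraic function) with |h(z)|² ≤ 1/(1−|z|²) near 0 and h(0) = 1. Then there is a constant C > 0 such that |z̄·h(z) − (1−|z|²)·h′(z)|² ≤ C·(1 − (1−|z|²)|h(z)|²) for all z sufficiently close to 0. -/
open Metric Set Complex

local notation "conj'" => starRingEnd ℂ

lemma aux1d (φ ψ : ℝ → ℝ) (T M : ℝ) (hT : 0 < T) (hM : 0 < M)
    (hpos : ∀ s ∈ Icc 0 T, 0 ≤ φ s)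
    (hd : ∀ s ∈ Icc 0 T, HasDerivAt φ (ψ s) s)
    (hlip : ∀ s ∈ Icc 0 T, ψ s ≤ ψ 0 + M * s)
    (hrange : -ψ 0 / M ≤ T) (hψ0 : ψ 0 ≤ 0) :
    (ψ 0) ^ 2 ≤ 2 * M * φ 0 := by
  set t : ℝ := -ψ 0 / M with ht
  have ht0 : 0 ≤ t := div_nonneg (by linarith) hM.le
  have htmem : t ∈ Icc (0:ℝ) T := ⟨ht0, hrange⟩
  set χ : ℝ → ℝ := fun s => φ s - ψ 0 * s - M * s ^ 2 / 2 with hχ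
  have hchi : ∀ s ∈ Icc (0:ℝ) T, HasDerivAt χ (ψ s - ψ 0 - M * s) s := by
    intro s hs
    have h1 : HasDerivAt (fun s : ℝ => ψ 0 * s) (ψ 0) s := by
      simpa using (hasDerivAt_id s).const_mul (ψ 0)
    have h2 : HasDerivAt (fun s : ℝ => M * s ^ 2 / 2) (M * s) s := by
      have := (hasDerivAt_pow 2 s).const_mul (M / 2)
      convert this using 1 <;> [rfl; rfl; (funext x; ring); (push_cast; ring)]
    exact ((hd s hs).sub h1).sub h2
  have hanti : AntitoneOn χ (Icc 0 T) := by
    apply antitoneOn_of_deriv_nonpos (convex_Icc 0 T)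
    · intro s hs; exact ((hchi s hs).continuousAt).continuousWithinAt
    · intro s hs
      rw [interior_Icc] at hs
      exact ((hchi s (Ioo_subset_Icc_self hs)).differentiableAt).differentiableWithinAt
    · intro s hs
      rw [interior_Icc] at hs
      rw [(hchi s (Ioo_subset_Icc_self hs)).deriv]
      have := hlip s (Ioo_subset_Icc_self hs)
      linarith
  have hχt : χ t ≤ χ 0 := hanti ⟨le_refl 0, hT.le⟩ htmem ht0
  have hMt : M * t = -ψ 0 := by rw [ht]; field_simp
  have hφt := hpos t htmem
  simp only [hχ] at hχt
  nlinarith [hχt, hφt, hMt, sq_nonneg (ψ 0)]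

lemma lineDeriv' (h : ℂ → ℂ) (δ₀ : ℝ)
    (hhol : DifferentiableOn ℂ h (ball 0 δ₀)) (z v : ℂ) (t : ℝ)
    (hw : z + t • v ∈ ball (0:ℂ) δ₀) :
    HasDerivAt
      (fun s : ℝ => 1 - (1 - ((z + s • v) * conj' (z + s • v)).re) *
        ((h (z + s • v)) * conj' (h (z + s • v))).re)
      (2 * ((v * (conj' (h (z + t • v)) *
        (conj' (z + t • v) * h (z + t • v)
          - (1 - (z + t • v) * conj' (z + t • v)) * deriv h (z + t • v)))).re)) t := by
  set w := z + t • v with hwdef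
  have hc : HasDerivAt (fun s : ℝ => z + s • v) v t := by
    simpa using ((hasDerivAt_id t).smul_const v).const_add z
  have hhw : HasDerivAt h (deriv h w) w :=
    (hhol.differentiableAt (isOpen_ball.mem_nhds hw)).hasDerivAt
  have hhc : HasDerivAt (fun s : ℝ => h (z + s • v)) (v * deriv h w) t := by
    simpa [Function.comp_def] using HasDerivAt.scomp t hhw hc
  have hcconj : HasDerivAt (fun s : ℝ => conj' (z + s • v)) (conj' v) t := by
    simpa using hc.star
  have hhconj : HasDerivAt (fun s : ℝ => conj' (h (z + s • v))) (conj' (v * deriv h w)) t := by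
    simpa using hhc.star
  have ha : HasDerivAt (fun s : ℝ => (z + s • v) * conj' (z + s • v))
      (v * conj' w + w * conj' v) t := hc.mul hcconj
  have hb : HasDerivAt (fun s : ℝ => h (z + s • v) * conj' (h (z + s • v)))
      ((v * deriv h w) * conj' (h w) + h w * conj' (v * deriv h w)) t := hhc.mul hhconj
  have hare : HasDerivAt (fun s : ℝ => ((z + s • v) * conj' (z + s • v)).re)
      (v * conj' w + w * conj' v).re t := by
    simpa only [Function.comp_def, Complex.reCLM_apply] using (Complex.reCLM.hasFDerivAt.comp_hasDerivAt t ha)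
  have hbre : HasDerivAt (fun s : ℝ => (h (z + s • v) * conj' (h (z + s • v))).re)
      ((v * deriv h w) * conj' (h w) + h w * conj' (v * deriv h w)).re t := by
    simpa only [Function.comp_def, Complex.reCLM_apply] using (Complex.reCLM.hasFDerivAt.comp_hasDerivAt t hb)
  have step1 := (hare.const_sub 1).mul hbre
  have step2 := step1.const_sub 1
  convert step2 using 1 <;> [rfl; rfl; rfl; skip]
  simp only [← hwdef, Complex.add_re, Complex.add_im, Complex.mul_re, Complex.mul_im,
    Complex.sub_re, Complex.sub_im, Complex.one_re, Complex.one_im, Complex.conj_re,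
    Complex.conj_im, Complex.neg_re, Complex.neg_im]
  ring

set_option maxHeartbeats 1000000 in
/-- For `h` holomorphic near `0` with `|h(z)|² ≤ 1/(1-|z|²)` near `0` and `h(0) = 1`,
one has `|z̄ h(z) - (1-|z|²) h'(z)|² ≤ C (1 - (1-|z|²)|h(z)|²)` near `0`. -/
theorem stmt_3 (h : ℂ → ℂ) (δ₀ : ℝ) (hδ₀ : 0 < δ₀)
    (hhol : DifferentiableOn ℂ h (ball 0 δ₀))
    (hbound : ∀ z ∈ ball (0:ℂ) δ₀, ‖h z‖ ^ 2 ≤ 1 / (1 - ‖z‖ ^ 2))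
    (h0 : h 0 = 1) :
    ∃ C > (0:ℝ), ∃ δ > (0:ℝ), ∀ z : ℂ, ‖z‖ < δ →
      ‖(starRingEnd ℂ) z * h z - (1 - (‖z‖ : ℂ) ^ 2) * deriv h z‖ ^ 2
        ≤ C * (1 - (1 - ‖z‖ ^ 2) * ‖h z‖ ^ 2) := by
  have hball0 : (0:ℂ) ∈ ball (0:ℂ) δ₀ := by simpa using hδ₀
  set r : ℝ := min δ₀ 1 / 2 with hrdef
  have hr0 : 0 < r := by
    have := lt_min hδ₀ one_pos; positivity
  have hr1 : r ≤ 1/2 := by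
    have := min_le_right δ₀ 1; rw [hrdef]; linarith
  have hrδ : r < δ₀ := by
    have := min_le_left δ₀ 1; rw [hrdef]; linarith
  have hK : closedBall (0:ℂ) r ⊆ ball 0 δ₀ := closedBall_subset_ball hrδ
  -- the auxiliary function A
  set A : ℂ → ℂ := fun w =>
    conj' (h w) * (conj' w * h w - (1 - w * conj' w) * deriv h w) with hA
  -- smoothness of A
  have han : AnalyticOnNhd ℂ h (ball 0 δ₀) := hhol.analyticOnNhd isOpen_ball
  have hCh : ContDiffOn ℝ 1 h (ball 0 δ₀) :=
    (han.contDiffOn isOpen_ball.uniqueDiffOn).restrict_scalars ℝ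
  have hCd : ContDiffOn ℝ 1 (deriv h) (ball 0 δ₀) :=
    (han.deriv.contDiffOn isOpen_ball.uniqueDiffOn).restrict_scalars ℝ
  have hconjC : ContDiff ℝ 1 (fun w : ℂ => conj' w) := by
    have := Complex.conjCLE.contDiff (𝕜 := ℝ) (n := 1)
    convert this using 2
    exact (Complex.conjCLE_apply _).symm
  have hCA : ContDiffOn ℝ 1 A (ball 0 δ₀) := by
    rw [hA]
    apply ContDiffOn.mul
    · exact hconjC.comp_contDiffOn hCh
    · apply ContDiffOn.sub
      · exact (hconjC.contDiffOn).mul hCh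
      · apply ContDiffOn.mul
        · exact ContDiffOn.sub contDiffOn_const (contDiffOn_id.mul hconjC.contDiffOn)
        · exact hCd
  -- bounds
  obtain ⟨M₀, hM₀⟩ := (isCompact_closedBall (0:ℂ) r).exists_bound_of_continuousOn
    (hCA.continuousOn.mono hK)
  have hM₀0 : 0 ≤ M₀ := le_trans (norm_nonneg _) (hM₀ 0 (mem_closedBall_self hr0.le))
  obtain ⟨M₁, hM₁⟩ := (isCompact_closedBall (0:ℂ) r).exists_bound_of_continuousOn
    ((hCA.continuousOn_fderiv_of_isOpen isOpen_ball le_rfl).mono hK)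
  have hAdiff : ∀ x ∈ closedBall (0:ℂ) r, DifferentiableAt ℝ A x := fun x hx =>
    (hCA.differentiableOn one_ne_zero).differentiableAt (isOpen_ball.mem_nhds (hK hx))
  have hAlip : ∀ x ∈ closedBall (0:ℂ) r, ∀ y ∈ closedBall (0:ℂ) r,
      ‖A y - A x‖ ≤ M₁ * ‖y - x‖ := fun x hx y hy =>
    Convex.norm_image_sub_le_of_norm_fderiv_le hAdiff hM₁ (convex_closedBall _ _) hx hy
  have hM₁0 : 0 ≤ M₁ := le_trans (norm_nonneg _) (hM₁ 0 (mem_closedBall_self hr0.le))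
  -- h stays away from 0 near 0
  obtain ⟨δ₂, hδ₂0, hδ₂⟩ : ∃ δ₂ > (0:ℝ), ∀ z : ℂ, ‖z‖ < δ₂ → 1/2 ≤ ‖h z‖ := by
    have hcont : ContinuousAt h 0 :=
      (hhol.differentiableAt (isOpen_ball.mem_nhds hball0)).continuousAt
    have hmem : ball (1:ℂ) (1/2) ∈ nhds (h 0) := by
      rw [h0]; exact isOpen_ball.mem_nhds (by simp)
    obtain ⟨ε, hε0, hε⟩ := Metric.mem_nhds_iff.mp (hcont hmem)
    refine ⟨ε, hε0, fun z hz => ?_⟩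
    have : h z ∈ ball (1:ℂ) (1/2) := hε (by simpa [mem_ball, dist_eq_norm] using hz)
    rw [mem_ball, dist_eq_norm] at this
    have h1 := norm_sub_norm_le (1:ℂ) (h z)
    rw [norm_sub_rev] at h1
    simp only [norm_one] at h1
    linarith
  -- U nonnegative on the closed ball
  have hU0 : ∀ w ∈ closedBall (0:ℂ) r, 0 ≤ 1 - (1 - ‖w‖^2) * ‖h w‖^2 := by
    intro w hw
    rw [mem_closedBall_zero_iff] at hw
    have hw1 : ‖w‖ ≤ 1/2 := le_trans hw hr1
    have h2 : (0:ℝ) < 1 - ‖w‖^2 := by nlinarith [norm_nonneg w]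
    have h3 := hbound w (hK (mem_closedBall_zero_iff.mpr hw))
    rw [le_div_iff₀ h2] at h3
    nlinarith
  -- re of mul-conj form equals norm form
  have hUeq : ∀ w : ℂ, 1 - (1 - (w * conj' w).re) * ((h w) * conj' (h w)).re
      = 1 - (1 - ‖w‖^2) * ‖h w‖^2 := by
    intro w
    rw [Complex.mul_conj, Complex.mul_conj]
    norm_cast
    simp [Complex.normSq_eq_norm_sq]
  -- the big constant
  set M : ℝ := max (max (2 * M₁) (8 * M₀ / r)) 1 with hM
  have hM1 : (1:ℝ) ≤ M := le_max_right _ _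
  have hMpos : (0:ℝ) < M := lt_of_lt_of_le one_pos hM1
  have hM2M₁ : 2 * M₁ ≤ M := le_trans (le_max_left _ _) (le_max_left _ _)
  have hM8M₀ : 8 * M₀ / r ≤ M := le_trans (le_max_right _ _) (le_max_left _ _)
  have h8 : 8 * M₀ ≤ M * r := by
    rw [div_le_iff₀ hr0] at hM8M₀; linarith
  refine ⟨2 * M, by linarith, min (r/2) δ₂, lt_min (by linarith) hδ₂0, ?_⟩
  intro z hz
  have hz_r : ‖z‖ < r/2 := lt_of_lt_of_le hz (min_le_left _ _)
  have hzK : z ∈ closedBall (0:ℂ) r := mem_closedBall_zero_iff.mpr (by linarith)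
  have hh2 : 1/2 ≤ ‖h z‖ := hδ₂ z (lt_of_lt_of_le hz (min_le_right _ _))
  -- identify the target with A
  have hnm : ((‖z‖ : ℂ))^2 = z * conj' z := by
    rw [Complex.mul_conj]
    norm_cast
    rw [Complex.sq_norm]
  set Tz : ℂ := conj' z * h z - (1 - (‖z‖ : ℂ)^2) * deriv h z with hTz
  have hATz : A z = conj' (h z) * Tz := by rw [hA, hTz, hnm]
  have hAnorm : ‖A z‖ = ‖h z‖ * ‖Tz‖ := by
    rw [hATz, norm_mul, RCLike.norm_conj]
  -- main estimate : 4‖A z‖² ≤ 2 M U(z)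
  have hmain : 4 * ‖A z‖^2 ≤ 2 * M * (1 - (1 - ‖z‖^2) * ‖h z‖^2) := by
    by_cases hAz : A z = 0
    · rw [hAz]
      simp only [norm_zero]
      have := hU0 z hzK
      nlinarith
    · have hAzn : (0:ℝ) < ‖A z‖ := norm_pos_iff.mpr hAz
      set v : ℂ := -conj' (A z) / (‖A z‖ : ℂ) with hv
      have hvnorm : ‖v‖ = 1 := by
        rw [hv, norm_div, norm_neg, RCLike.norm_conj, Complex.norm_real,
          Real.norm_eq_abs, _root_.abs_of_nonneg (norm_nonneg _), div_self hAzn.ne']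
      have hvA : (v * A z).re = -‖A z‖ := by
        have h1 : v * A z = ((-‖A z‖ : ℝ) : ℂ) := by
          rw [hv, div_mul_eq_mul_div, neg_mul, mul_comm (conj' (A z)) (A z),
            Complex.mul_conj, Complex.normSq_eq_norm_sq]
          push_cast
          rw [div_eq_iff (by exact_mod_cast hAzn.ne' : ((‖A z‖:ℝ):ℂ) ≠ 0)]
          ring
        rw [h1]; simp
      -- line membership
      have hmem : ∀ s ∈ Icc (0:ℝ) (r/2), z + s • v ∈ closedBall (0:ℂ) r := by
        intro s hs
        rw [mem_closedBall_zero_iff]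
        have hn : ‖z + s • v‖ ≤ ‖z‖ + ‖s • v‖ := norm_add_le _ _
        rw [norm_smul, hvnorm, Real.norm_eq_abs, _root_.abs_of_nonneg hs.1, mul_one] at hn
        have := hs.2
        linarith
      -- hypotheses of aux1d
      have hpos' : ∀ s ∈ Icc (0:ℝ) (r/2),
          0 ≤ 1 - (1 - ((z + s • v) * conj' (z + s • v)).re) *
            ((h (z + s • v)) * conj' (h (z + s • v))).re := by
        intro s hs
        rw [hUeq]
        exact hU0 _ (hmem s hs)
      have hd' : ∀ s ∈ Icc (0:ℝ) (r/2),
          HasDerivAt (fun s : ℝ => 1 - (1 - ((z + s • v) * conj' (z + s • v)).re) *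
            ((h (z + s • v)) * conj' (h (z + s • v))).re)
          (2 * ((v * A (z + s • v)).re)) s := fun s hs =>
        lineDeriv' h δ₀ hhol z v s (hK (hmem s hs))
      have hψat0 : 2 * ((v * A (z + (0:ℝ) • v)).re) = -(2 * ‖A z‖) := by
        rw [show z + (0:ℝ) • v = z by simp, hvA]; ring
      have hlip' : ∀ s ∈ Icc (0:ℝ) (r/2),
          2 * ((v * A (z + s • v)).re) ≤ 2 * ((v * A (z + (0:ℝ) • v)).re) + M * s := by
        intro s hs
        rw [hψat0]
        have e0 : (v * A (z + s • v)).re - (v * A z).re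
            = (v * (A (z + s • v) - A z)).re := by
          rw [mul_sub, Complex.sub_re]
        have e1 : (v * (A (z + s • v) - A z)).re ≤ ‖A (z + s • v) - A z‖ := by
          calc (v * (A (z + s • v) - A z)).re
              ≤ ‖v * (A (z + s • v) - A z)‖ := Complex.re_le_norm _
            _ = ‖v * (A (z + s • v) - A z)‖ := rfl
            _ = ‖v‖ * ‖A (z + s • v) - A z‖ := norm_mul _ _
            _ = ‖A (z + s • v) - A z‖ := by rw [hvnorm, one_mul]
        have e2 : ‖A (z + s • v) - A z‖ ≤ M₁ * s := by
          have := hAlip z hzK (z + s • v) (hmem s hs)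
          rw [add_sub_cancel_left, norm_smul, hvnorm, Real.norm_eq_abs,
            _root_.abs_of_nonneg hs.1, mul_one] at this
          linarith
        have e3 : 2 * M₁ * s ≤ M * s := mul_le_mul_of_nonneg_right hM2M₁ hs.1
        have e4 := hvA
        linarith [e0 ▸ (e1.trans e2)]
      have hrange' : -(2 * ((v * A (z + (0:ℝ) • v)).re)) / M ≤ r/2 := by
        rw [hψat0, neg_neg, div_le_iff₀ hMpos]
        have := hM₀ z hzK
        nlinarith
      have hψ0' : 2 * ((v * A (z + (0:ℝ) • v)).re) ≤ 0 := by
        rw [hψat0]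
        have := norm_nonneg (A z)
        linarith
      have key := aux1d
        (fun s : ℝ => 1 - (1 - ((z + s • v) * conj' (z + s • v)).re) *
          ((h (z + s • v)) * conj' (h (z + s • v))).re)
        (fun s : ℝ => 2 * ((v * A (z + s • v)).re))
        (r/2) M (by linarith) hMpos hpos' hd' hlip' hrange' hψ0'
      rw [hψat0] at key
      have hφ0 : 1 - (1 - ((z + (0:ℝ) • v) * conj' (z + (0:ℝ) • v)).re) *
          ((h (z + (0:ℝ) • v)) * conj' (h (z + (0:ℝ) • v))).re
          = 1 - (1 - ‖z‖^2) * ‖h z‖^2 := by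
        rw [show z + (0:ℝ) • v = z by simp, hUeq]
      rw [hφ0] at key
      nlinarith [key]
  -- finish
  have hfin : ‖Tz‖^2 ≤ 4 * ‖A z‖^2 := by
    have e : ‖Tz‖ / 2 ≤ ‖A z‖ := by
      rw [hAnorm]; nlinarith [norm_nonneg Tz]
    have e2 := mul_self_le_mul_self (by positivity : (0:ℝ) ≤ ‖Tz‖ / 2) e
    nlinarith [e2]
  calc ‖Tz‖^2 ≤ 4 * ‖A z‖^2 := hfin
    _ ≤ 2 * M * (1 - (1 - ‖z‖^2) * ‖h z‖^2) := hmain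
end

section
/- Let h be holomorphic near 0 in ℂ with |h(z)|² ≤ 1/(1−|z|²) near 0 and h(0) = 1. Then there is a constant C > 0 such that for all (z,w) in the unit ball of ℂ² with z close to 0, |z̄·h(z) − |w|²·h′(z)| ≤ C·|1 − h(z)w|^{1/2}. -/
open Metric Set

private lemma hasDerivAt_re_comp {c : ℝ → ℂ} {c' : ℂ} {t : ℝ} (hc : HasDerivAt c c' t) :
    HasDerivAt (fun s => (c s).re) c'.re t :=
  Complex.reCLM.hasFDerivAt.comp_hasDerivAt t hc

private lemma hasDerivAt_conj_comp {c : ℝ → ℂ} {c' : ℂ} {t : ℝ} (hc : HasDerivAt c c' t) :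
    HasDerivAt (fun s => (starRingEnd ℂ) (c s)) ((starRingEnd ℂ) c') t := by
  exact Complex.conjCLE.toContinuousLinearMap.hasFDerivAt.comp_hasDerivAt t hc

private lemma hasDerivAt_normSq_comp {c : ℝ → ℂ} {c' : ℂ} {t : ℝ} (hc : HasDerivAt c c' t) :
    HasDerivAt (fun s => Complex.normSq (c s)) (2 * ((starRingEnd ℂ) (c t) * c').re) t := by
  have hre : HasDerivAt (fun s => (c s).re) c'.re t := hasDerivAt_re_comp hc
  have him : HasDerivAt (fun s => (c s).im) c'.im t :=
    Complex.imCLM.hasFDerivAt.comp_hasDerivAt t hc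
  have H := (hre.mul hre).add (him.mul him)
  have heq : (fun s => (c s).re * (c s).re + (c s).im * (c s).im)
      = fun s => Complex.normSq (c s) := by
    funext s; rw [Complex.normSq_apply]
  rw [show (((fun s => (c s).re) * fun s => (c s).re) + (fun s => (c s).im) * fun s => (c s).im) = fun s => Complex.normSq (c s) from heq] at H
  exact H.congr_deriv (by simp [Complex.mul_re, Complex.conj_re, Complex.conj_im]; ring)

private lemma quad_upper {g g₁ g₂ : ℝ → ℝ} {r M : ℝ} (hr : 0 < r)
    (hd1 : ∀ t ∈ Icc (0:ℝ) r, HasDerivAt g (g₁ t) t)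
    (hd2 : ∀ t ∈ Icc (0:ℝ) r, HasDerivAt g₁ (g₂ t) t)
    (hg2 : ∀ t ∈ Icc (0:ℝ) r, |g₂ t| ≤ M) :
    ∀ t ∈ Icc (0:ℝ) r, g t ≤ g 0 + g₁ 0 * t + M * t ^ 2 / 2 := by
  have hlip : ∀ t ∈ Icc (0:ℝ) r, g₁ t - g₁ 0 ≤ M * t := by
    intro t ht
    have := Convex.norm_image_sub_le_of_norm_hasDerivWithin_le
      (f := g₁) (f' := g₂) (C := M)
      (fun x hx => (hd2 x hx).hasDerivWithinAt)
      (fun x hx => by rw [Real.norm_eq_abs]; exact hg2 x hx)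
      (convex_Icc 0 r) (left_mem_Icc.2 hr.le) ht
    have h2 : |g₁ t - g₁ 0| ≤ M * |t - 0| := by
      simpa [Real.norm_eq_abs] using this
    calc g₁ t - g₁ 0 ≤ |g₁ t - g₁ 0| := le_abs_self _
      _ ≤ M * |t - 0| := h2
      _ = M * t := by rw [sub_zero, abs_of_nonneg ht.1]
  set φ : ℝ → ℝ := fun t => g t - g 0 - g₁ 0 * t - M * t ^ 2 / 2 with hφ
  have hφd : ∀ t ∈ Icc (0:ℝ) r, HasDerivAt φ (g₁ t - g₁ 0 - M * t) t := by
    intro t ht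
    have h1 := (hd1 t ht).sub_const (g 0)
    have h2 := (hasDerivAt_id t).const_mul (g₁ 0)
    have h3 := ((hasDerivAt_pow 2 t).const_mul M).div_const 2
    have H := (h1.sub h2).sub h3
    exact H.congr_deriv (by rw [show (2:ℕ) - 1 = 1 from rfl]; push_cast; ring)
  have hanti : AntitoneOn φ (Icc 0 r) := by
    apply antitoneOn_of_deriv_nonpos (convex_Icc 0 r)
    · exact fun t ht => ((hφd t ht).continuousAt).continuousWithinAt
    · intro t ht
      rw [interior_Icc] at ht
      exact ((hφd t ⟨ht.1.le, ht.2.le⟩).differentiableAt).differentiableWithinAt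
    · intro t ht
      rw [interior_Icc] at ht
      rw [(hφd t ⟨ht.1.le, ht.2.le⟩).deriv]
      have := hlip t ⟨ht.1.le, ht.2.le⟩
      linarith
  intro t ht
  have := hanti (left_mem_Icc.2 hr.le) ht ht.1
  simp only [hφ] at this
  nlinarith [this]

private lemma grad_bound {g g₁ g₂ : ℝ → ℝ} {r M : ℝ} (hr : 0 < r) (hM : 0 ≤ M)
    (hd1 : ∀ t ∈ Icc (0:ℝ) r, HasDerivAt g (g₁ t) t)
    (hd2 : ∀ t ∈ Icc (0:ℝ) r, HasDerivAt g₁ (g₂ t) t)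
    (hg2 : ∀ t ∈ Icc (0:ℝ) r, |g₂ t| ≤ M)
    (hpos : ∀ t ∈ Icc (0:ℝ) r, 0 ≤ g t)
    (hsq : Real.sqrt (g 0) ≤ r) :
    -g₁ 0 ≤ (1 + M / 2) * Real.sqrt (g 0) := by
  have key : ∀ t ∈ Ioc (0:ℝ) r, -g₁ 0 ≤ g 0 / t + M * t / 2 := by
    intro t ht
    have h1 := quad_upper hr hd1 hd2 hg2 t ⟨ht.1.le, ht.2⟩
    have h2 := hpos t ⟨ht.1.le, ht.2⟩
    have ht0 := ht.1
    have heq : (g 0 + M * t ^ 2 / 2) / t = g 0 / t + M * t / 2 := by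
      field_simp
    rw [← heq, le_div_iff₀ ht0]
    nlinarith
  have hg0 : 0 ≤ g 0 := hpos 0 (left_mem_Icc.2 hr.le)
  rcases eq_or_lt_of_le hg0 with he | hlt
  · rw [← he, Real.sqrt_zero, mul_zero]
    apply le_of_forall_pos_le_add
    intro ε hε
    have hM1 : (0:ℝ) < M + 1 := by linarith
    have htpos : 0 < min r (2 * ε / (M + 1)) := by positivity
    have hk := key _ ⟨htpos, min_le_left _ _⟩
    rw [← he] at hk
    have h4 : min r (2 * ε / (M + 1)) ≤ 2 * ε / (M + 1) := min_le_right _ _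
    have h5 : min r (2 * ε / (M + 1)) * (M + 1) ≤ 2 * ε := by
      rw [← le_div_iff₀ hM1]; exact h4
    simp only [zero_div] at hk
    nlinarith
  · have hs : 0 < Real.sqrt (g 0) := Real.sqrt_pos.2 hlt
    have := key (Real.sqrt (g 0)) ⟨hs, hsq⟩
    rwa [Real.div_sqrt, show Real.sqrt (g 0) + M * Real.sqrt (g 0) / 2
      = (1 + M / 2) * Real.sqrt (g 0) by ring] at this

private lemma line_est (h : ℂ → ℂ) (U : Set ℂ)
    (H1 : ∀ ζ ∈ U, HasDerivAt h (deriv h ζ) ζ)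
    (H2 : ∀ ζ ∈ U, HasDerivAt (deriv h) (deriv (deriv h) ζ) ζ)
    (z v : ℂ) (hv : ‖v‖ = 1) (r K : ℝ) (hr : 0 < r) (hK : 1 ≤ K)
    (hmem : ∀ t ∈ Icc (0:ℝ) r, z + t • v ∈ U)
    (hK1 : ∀ t ∈ Icc (0:ℝ) r, ‖h (z + t • v)‖ ≤ K)
    (hK2 : ∀ t ∈ Icc (0:ℝ) r, ‖deriv h (z + t • v)‖ ≤ K)
    (hK3 : ∀ t ∈ Icc (0:ℝ) r, ‖deriv (deriv h) (z + t • v)‖ ≤ K)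
    (hn : ∀ t ∈ Icc (0:ℝ) r, Complex.normSq (z + t • v) ≤ 1)
    (hpos : ∀ t ∈ Icc (0:ℝ) r,
      0 ≤ 1 - (1 - Complex.normSq (z + t • v)) * Complex.normSq (h (z + t • v)))
    (hsq : Real.sqrt (1 - (1 - Complex.normSq z) * Complex.normSq (h z)) ≤ r) :
    -(2 * (v * ((starRingEnd ℂ) (h z) *
        ((starRingEnd ℂ) z * h z - ((1 - Complex.normSq z : ℝ) : ℂ) * deriv h z))).re)
      ≤ (1 + 7 * K ^ 2) * Real.sqrt (1 - (1 - Complex.normSq z) * Complex.normSq (h z)) := by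
  set ζ : ℝ → ℂ := fun t => z + t • v with hζdef
  have hζ : ∀ t : ℝ, HasDerivAt ζ v t := fun t => by
    exact (((hasDerivAt_id t).smul_const v).const_add z).congr_deriv (by simp)
  set g : ℝ → ℝ := fun t => 1 - (1 - Complex.normSq (ζ t)) * Complex.normSq (h (ζ t)) with hgdef
  set g₁ : ℝ → ℝ := fun t =>
      (2 * ((starRingEnd ℂ) (ζ t) * v).re) * Complex.normSq (h (ζ t))
      - (1 - Complex.normSq (ζ t)) * (2 * ((starRingEnd ℂ) (h (ζ t)) * (v * deriv h (ζ t))).re)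
    with hg₁def
  set g₂ : ℝ → ℝ := fun t =>
      (2 * ((starRingEnd ℂ) v * v).re) * Complex.normSq (h (ζ t))
      + 2 * (2 * ((starRingEnd ℂ) (ζ t) * v).re)
          * (2 * ((starRingEnd ℂ) (h (ζ t)) * (v * deriv h (ζ t))).re)
      - (1 - Complex.normSq (ζ t)) * (2 * (((starRingEnd ℂ) (v * deriv h (ζ t)) * (v * deriv h (ζ t))).re
          + ((starRingEnd ℂ) (h (ζ t)) * (v * (v * deriv (deriv h) (ζ t)))).re))
    with hg₂def
  have hd1 : ∀ t ∈ Icc (0:ℝ) r, HasDerivAt g (g₁ t) t := by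
    intro t ht
    have ha := hasDerivAt_normSq_comp (hζ t)
    have hc : HasDerivAt (fun s => h (ζ s)) (v * deriv h (ζ t)) t :=
      (H1 _ (hmem t ht)).scomp t (hζ t)
    have hb := hasDerivAt_normSq_comp hc
    have H := ((ha.const_sub 1).mul hb).const_sub 1
    exact H.congr_deriv (by simp only [hg₁def]; ring)
  have hd2 : ∀ t ∈ Icc (0:ℝ) r, HasDerivAt g₁ (g₂ t) t := by
    intro t ht
    have ha := hasDerivAt_normSq_comp (hζ t)
    have hc : HasDerivAt (fun s => h (ζ s)) (v * deriv h (ζ t)) t :=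
      (H1 _ (hmem t ht)).scomp t (hζ t)
    have hb := hasDerivAt_normSq_comp hc
    have hd : HasDerivAt (fun s => deriv h (ζ s)) (v * deriv (deriv h) (ζ t)) t :=
      by have := (H2 _ (hmem t ht)).scomp t (hζ t); exact this
    have ha' : HasDerivAt (fun s => 2 * ((starRingEnd ℂ) (ζ s) * v).re)
        (2 * ((starRingEnd ℂ) v * v).re) t :=
      (hasDerivAt_re_comp ((hasDerivAt_conj_comp (hζ t)).mul_const v)).const_mul 2
    have hvd : HasDerivAt (fun s => v * deriv h (ζ s)) (v * (v * deriv (deriv h) (ζ t))) t :=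
      hd.const_mul v
    have hcc : HasDerivAt (fun s => (starRingEnd ℂ) (h (ζ s)))
        ((starRingEnd ℂ) (v * deriv h (ζ t))) t := hasDerivAt_conj_comp hc
    have hq := hcc.mul hvd
    have hb' : HasDerivAt (fun s => 2 * ((starRingEnd ℂ) (h (ζ s)) * (v * deriv h (ζ s))).re)
        (2 * ((starRingEnd ℂ) (v * deriv h (ζ t)) * (v * deriv h (ζ t))
          + (starRingEnd ℂ) (h (ζ t)) * (v * (v * deriv (deriv h) (ζ t)))).re) t :=
      (hasDerivAt_re_comp hq).const_mul 2
    have H := (ha'.mul hb).sub ((ha.const_sub 1).mul hb')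
    exact H.congr_deriv (by simp only [hg₂def, Complex.add_re]; ring)
  have hg2b : ∀ t ∈ Icc (0:ℝ) r, |g₂ t| ≤ 14 * K ^ 2 := by
    intro t ht
    have hK0 : (0:ℝ) < K := lt_of_lt_of_le one_pos hK
    have hnorm1 : ‖ζ t‖ ≤ 1 := by
      have h1 : ‖ζ t‖ ^ 2 ≤ 1 := by
        rw [← Complex.normSq_eq_norm_sq]; exact hn t ht
      nlinarith [norm_nonneg (ζ t)]
    have hB : Complex.normSq (h (ζ t)) ≤ K ^ 2 := by
      rw [Complex.normSq_eq_norm_sq]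
      exact pow_le_pow_left₀ (norm_nonneg _) (hK1 t ht) 2
    have hBpos := Complex.normSq_nonneg (h (ζ t))
    have hX1 : |((starRingEnd ℂ) v * v).re| ≤ 1 := by
      calc |((starRingEnd ℂ) v * v).re| ≤ ‖(starRingEnd ℂ) v * v‖ := Complex.abs_re_le_norm _
        _ = ‖v‖ * ‖v‖ := by rw [norm_mul, RingHomIsometric.norm_map]
        _ = 1 := by rw [hv]; ring
    have hX3 : |((starRingEnd ℂ) (ζ t) * v).re| ≤ 1 := by
      calc |((starRingEnd ℂ) (ζ t) * v).re| ≤ ‖(starRingEnd ℂ) (ζ t) * v‖ :=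
            Complex.abs_re_le_norm _
        _ = ‖ζ t‖ * ‖v‖ := by rw [norm_mul, RingHomIsometric.norm_map]
        _ ≤ 1 * 1 := by rw [hv]; exact mul_le_mul_of_nonneg_right hnorm1 zero_le_one
        _ = 1 := by ring
    have hX4 : |((starRingEnd ℂ) (h (ζ t)) * (v * deriv h (ζ t))).re| ≤ K ^ 2 := by
      calc |((starRingEnd ℂ) (h (ζ t)) * (v * deriv h (ζ t))).re|
          ≤ ‖(starRingEnd ℂ) (h (ζ t)) * (v * deriv h (ζ t))‖ := Complex.abs_re_le_norm _
        _ = ‖h (ζ t)‖ * (‖v‖ * ‖deriv h (ζ t)‖) := by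
            rw [norm_mul, norm_mul, RingHomIsometric.norm_map]
        _ ≤ K * (1 * K) := by
            apply mul_le_mul (hK1 t ht) _ (by positivity) hK0.le
            rw [hv]
            exact mul_le_mul_of_nonneg_left (hK2 t ht) zero_le_one
        _ = K ^ 2 := by ring
    have hX5 : |((starRingEnd ℂ) (v * deriv h (ζ t)) * (v * deriv h (ζ t))).re| ≤ K ^ 2 := by
      calc |((starRingEnd ℂ) (v * deriv h (ζ t)) * (v * deriv h (ζ t))).re|
          ≤ ‖(starRingEnd ℂ) (v * deriv h (ζ t)) * (v * deriv h (ζ t))‖ :=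
            Complex.abs_re_le_norm _
        _ = ‖v * deriv h (ζ t)‖ * ‖v * deriv h (ζ t)‖ := by
            rw [norm_mul, RingHomIsometric.norm_map]
        _ ≤ K * K := by
            have : ‖v * deriv h (ζ t)‖ ≤ K := by
              rw [norm_mul, hv, one_mul]; exact hK2 t ht
            exact mul_le_mul this this (norm_nonneg _) hK0.le
        _ = K ^ 2 := by ring
    have hX6 : |((starRingEnd ℂ) (h (ζ t)) * (v * (v * deriv (deriv h) (ζ t)))).re| ≤ K ^ 2 := by
      calc |((starRingEnd ℂ) (h (ζ t)) * (v * (v * deriv (deriv h) (ζ t)))).re|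
          ≤ ‖(starRingEnd ℂ) (h (ζ t)) * (v * (v * deriv (deriv h) (ζ t)))‖ :=
            Complex.abs_re_le_norm _
        _ = ‖h (ζ t)‖ * (‖v‖ * (‖v‖ * ‖deriv (deriv h) (ζ t)‖)) := by
            rw [norm_mul, norm_mul, norm_mul, RingHomIsometric.norm_map]
        _ ≤ K * (1 * (1 * K)) := by
            apply mul_le_mul (hK1 t ht) _ (by positivity) hK0.le
            rw [hv]
            apply mul_le_mul_of_nonneg_left _ zero_le_one
            exact mul_le_mul_of_nonneg_left (hK3 t ht) zero_le_one
        _ = K ^ 2 := by ring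
    have hC : 0 ≤ 1 - Complex.normSq (ζ t) ∧ 1 - Complex.normSq (ζ t) ≤ 1 := by
      constructor
      · linarith [hn t ht]
      · linarith [Complex.normSq_nonneg (ζ t)]
    obtain ⟨ha1, ha2⟩ := abs_le.1 hX1
    have p1u : ((starRingEnd ℂ) v * v).re * Complex.normSq (h (ζ t)) ≤ 1 * Complex.normSq (h (ζ t)) :=
      mul_le_mul_of_nonneg_right ha2 hBpos
    have p1l : (-1) * Complex.normSq (h (ζ t)) ≤ ((starRingEnd ℂ) v * v).re * Complex.normSq (h (ζ t)) :=
      mul_le_mul_of_nonneg_right ha1 hBpos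
    have p2 : |((starRingEnd ℂ) (ζ t) * v).re * ((starRingEnd ℂ) (h (ζ t)) * (v * deriv h (ζ t))).re| ≤ K ^ 2 := by
      rw [abs_mul]
      calc |((starRingEnd ℂ) (ζ t) * v).re| * |((starRingEnd ℂ) (h (ζ t)) * (v * deriv h (ζ t))).re|
          ≤ 1 * (K ^ 2) := mul_le_mul hX3 hX4 (abs_nonneg _) zero_le_one
        _ = K ^ 2 := one_mul _
    have p3 : |(1 - Complex.normSq (ζ t)) * (((starRingEnd ℂ) (v * deriv h (ζ t)) * (v * deriv h (ζ t))).re + ((starRingEnd ℂ) (h (ζ t)) * (v * (v * deriv (deriv h) (ζ t)))).re)| ≤ 2 * K ^ 2 := by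
      rw [abs_mul, abs_of_nonneg hC.1]
      have habs : |((starRingEnd ℂ) (v * deriv h (ζ t)) * (v * deriv h (ζ t))).re + ((starRingEnd ℂ) (h (ζ t)) * (v * (v * deriv (deriv h) (ζ t)))).re| ≤ 2 * K ^ 2 := by
        calc |((starRingEnd ℂ) (v * deriv h (ζ t)) * (v * deriv h (ζ t))).re + ((starRingEnd ℂ) (h (ζ t)) * (v * (v * deriv (deriv h) (ζ t)))).re|
            ≤ |((starRingEnd ℂ) (v * deriv h (ζ t)) * (v * deriv h (ζ t))).re| + |((starRingEnd ℂ) (h (ζ t)) * (v * (v * deriv (deriv h) (ζ t)))).re| := abs_add_le _ _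
          _ ≤ K ^ 2 + K ^ 2 := add_le_add hX5 hX6
          _ = 2 * K ^ 2 := by ring
      calc (1 - Complex.normSq (ζ t)) * |((starRingEnd ℂ) (v * deriv h (ζ t)) * (v * deriv h (ζ t))).re + ((starRingEnd ℂ) (h (ζ t)) * (v * (v * deriv (deriv h) (ζ t)))).re|
          ≤ 1 * (2 * K ^ 2) := mul_le_mul hC.2 habs (abs_nonneg _) zero_le_one
        _ = 2 * K ^ 2 := one_mul _
    obtain ⟨p2l, p2u⟩ := abs_le.1 p2
    obtain ⟨p3l, p3u⟩ := abs_le.1 p3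
    rw [abs_le]
    simp only [hg₂def]
    constructor <;> nlinarith [hBpos, hB, p1u, p1l, p2l, p2u, p3l, p3u]
  -- apply grad_bound
  have hM : (0:ℝ) ≤ 14 * K ^ 2 := by positivity
  have hpos' : ∀ t ∈ Icc (0:ℝ) r, 0 ≤ g t := fun t ht => hpos t ht
  have hg0 : g 0 = 1 - (1 - Complex.normSq z) * Complex.normSq (h z) := by
    simp [hgdef, hζdef]
  have hG := grad_bound hr hM hd1 hd2 hg2b hpos' (by rw [hg0]; exact hsq)
  rw [hg0] at hG
  have hg₁0 : g₁ 0 = 2 * (v * ((starRingEnd ℂ) (h z) *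
      ((starRingEnd ℂ) z * h z - ((1 - Complex.normSq z : ℝ) : ℂ) * deriv h z))).re := by
    have hz0 : ζ 0 = z := by simp [hζdef]
    simp only [hg₁def, hz0]
    simp [Complex.mul_re, Complex.mul_im, Complex.sub_re, Complex.sub_im,
      Complex.normSq_apply, Complex.conj_re, Complex.conj_im, Complex.ofReal_re,
      Complex.ofReal_im, Complex.one_re, Complex.one_im]
    ring
  rw [hg₁0] at hG
  calc -(2 * (v * ((starRingEnd ℂ) (h z) *
        ((starRingEnd ℂ) z * h z - ((1 - Complex.normSq z : ℝ) : ℂ) * deriv h z))).re)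
      ≤ (1 + 14 * K ^ 2 / 2) * Real.sqrt (1 - (1 - Complex.normSq z) * Complex.normSq (h z)) := hG
    _ = (1 + 7 * K ^ 2) * Real.sqrt (1 - (1 - Complex.normSq z) * Complex.normSq (h z)) := by
        ring

set_option maxHeartbeats 1600000 in
/-- For `h` holomorphic near `0` with `|h(z)|² ≤ 1/(1-|z|²)` near `0` and `h(0) = 1`,
for `(z,w)` in the unit ball of `ℂ²` with `z` close to `0`:
`|z̄ h(z) - |w|² h'(z)| ≤ C |1 - h(z) w|^{1/2}`. -/
theorem stmt_4 (h : ℂ → ℂ) (δ₀ : ℝ) (hδ₀ : 0 < δ₀)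
    (hhol : DifferentiableOn ℂ h (ball 0 δ₀))
    (hbound : ∀ z ∈ ball (0:ℂ) δ₀, ‖h z‖ ^ 2 ≤ 1 / (1 - ‖z‖ ^ 2))
    (h0 : h 0 = 1) :
    ∃ C > (0:ℝ), ∃ δ > (0:ℝ), ∀ z w : ℂ, ‖z‖ ^ 2 + ‖w‖ ^ 2 < 1 → ‖z‖ < δ →
      ‖(starRingEnd ℂ) z * h z - ((‖w‖ : ℂ)) ^ 2 * deriv h z‖
        ≤ C * Real.sqrt ‖1 - h z * w‖ := by
  have hns : ∀ x : ℂ, Complex.normSq x = ‖x‖ ^ 2 := fun x => by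
    rw [Complex.normSq_eq_norm_sq]
  set δ₁ : ℝ := min (δ₀ / 2) (1 / 2) with hδ₁def
  have hδ₁pos : 0 < δ₁ := lt_min (by linarith) one_half_pos
  have hδ₁le : δ₁ ≤ 1 / 2 := min_le_right _ _
  have hδ₁ball : closedBall (0:ℂ) δ₁ ⊆ ball 0 δ₀ := by
    apply closedBall_subset_ball
    calc δ₁ ≤ δ₀ / 2 := min_le_left _ _
      _ < δ₀ := by linarith
  have hA : AnalyticOnNhd ℂ h (ball 0 δ₀) := hhol.analyticOnNhd isOpen_ball
  have hA' : AnalyticOnNhd ℂ (deriv h) (ball 0 δ₀) := hA.deriv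
  have H1 : ∀ ζ ∈ ball (0:ℂ) δ₀, HasDerivAt h (deriv h ζ) ζ := fun ζ hζ =>
    (hA ζ hζ).differentiableAt.hasDerivAt
  have H2 : ∀ ζ ∈ ball (0:ℂ) δ₀, HasDerivAt (deriv h) (deriv (deriv h) ζ) ζ := fun ζ hζ =>
    (hA' ζ hζ).differentiableAt.hasDerivAt
  -- uniform bound K on closedBall δ₁
  obtain ⟨K₁, hK₁⟩ := (isCompact_closedBall (0:ℂ) δ₁).exists_bound_of_continuousOn
    (hA.continuousOn.mono hδ₁ball)
  obtain ⟨K₂, hK₂⟩ := (isCompact_closedBall (0:ℂ) δ₁).exists_bound_of_continuousOn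
    (hA'.continuousOn.mono hδ₁ball)
  obtain ⟨K₃, hK₃⟩ := (isCompact_closedBall (0:ℂ) δ₁).exists_bound_of_continuousOn
    (hA'.deriv.continuousOn.mono hδ₁ball)
  set K : ℝ := max 1 (max K₁ (max K₂ K₃)) with hKdef
  have hK : 1 ≤ K := le_max_left _ _
  have hK0 : 0 < K := lt_of_lt_of_le one_pos hK
  have hKb1 : ∀ x ∈ closedBall (0:ℂ) δ₁, ‖h x‖ ≤ K := fun x hx =>
    le_trans (hK₁ x hx) (le_trans (le_max_left _ _) (le_max_right _ _))
  have hKb2 : ∀ x ∈ closedBall (0:ℂ) δ₁, ‖deriv h x‖ ≤ K := fun x hx =>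
    le_trans (hK₂ x hx) (le_trans (le_trans (le_max_left _ _) (le_max_right _ _)) (le_max_right _ _))
  have hKb3 : ∀ x ∈ closedBall (0:ℂ) δ₁, ‖deriv (deriv h) x‖ ≤ K := fun x hx =>
    le_trans (hK₃ x hx) (le_trans (le_trans (le_max_right _ _) (le_max_right _ _)) (le_max_right _ _))
  -- choose δ via continuity
  set r : ℝ := δ₁ / 2 with hrdef
  have hr : 0 < r := by positivity
  have h0mem : (0:ℂ) ∈ ball (0:ℂ) δ₀ := mem_ball_self hδ₀
  have hcont1 : ContinuousAt h 0 := (hA 0 h0mem).continuousAt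
  have hcontF : ContinuousAt (fun x : ℂ => 1 - (1 - Complex.normSq x) * Complex.normSq (h x)) 0 := by
    apply ContinuousAt.sub continuousAt_const
    apply ContinuousAt.mul
    · exact continuousAt_const.sub Complex.continuous_normSq.continuousAt
    · exact Complex.continuous_normSq.continuousAt.comp hcont1
  obtain ⟨δa, hδa, hδaP⟩ := Metric.continuousAt_iff.1 hcont1 (1/2) one_half_pos
  obtain ⟨δb, hδb, hδbP⟩ := Metric.continuousAt_iff.1 hcontF (r ^ 2) (by positivity)
  set δ : ℝ := min δa (min δb r) with hδdef
  have hδpos : 0 < δ := lt_min hδa (lt_min hδb hr)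
  -- the constant
  have hsqrt2 : (0:ℝ) < Real.sqrt 2 := Real.sqrt_pos.2 (by norm_num)
  have hsqrtK : (0:ℝ) < Real.sqrt (1 + K) := Real.sqrt_pos.2 (by linarith)
  refine ⟨(1 + 7 * K ^ 2) * Real.sqrt 2 + 2 * K * Real.sqrt (1 + K), by positivity, δ, hδpos, ?_⟩
  intro z w hzw hzδ
  -- basic facts about z, w
  have hzr : ‖z‖ < r := lt_of_lt_of_le hzδ (le_trans (min_le_right _ _) (min_le_right _ _))
  have hz1 : ‖z‖ < 1 / 2 := by
    have : r ≤ 1 / 2 := by rw [hrdef]; linarith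
    linarith
  have hzcb : z ∈ closedBall (0:ℂ) δ₁ := by
    rw [mem_closedBall_zero_iff]
    rw [hrdef] at hzr
    linarith
  have hzball : z ∈ ball (0:ℂ) δ₀ := hδ₁ball hzcb
  have hw1 : ‖w‖ ≤ 1 := by nlinarith [norm_nonneg w, norm_nonneg z, sq_nonneg ‖z‖]
  have hd1z : (0:ℝ) < 1 - ‖z‖ ^ 2 := by nlinarith
  have hhb := hbound z hzball
  have hhb' : ‖h z‖ ^ 2 * (1 - ‖z‖ ^ 2) ≤ 1 := by
    rw [le_div_iff₀ hd1z] at hhb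
    exact hhb
  have hhz1 : ‖h z - 1‖ < 1 / 2 := by
    have hza : dist z 0 < δa := by
      rw [dist_zero_right]; exact lt_of_lt_of_le hzδ (min_le_left _ _)
    have := hδaP hza
    rwa [dist_eq_norm, h0] at this
  have hhzlb : 1 / 2 ≤ ‖h z‖ := by
    have ht : ‖(1:ℂ)‖ ≤ ‖h z‖ + ‖h z - 1‖ := by
      calc ‖(1:ℂ)‖ = ‖h z - (h z - 1)‖ := by ring_nf
        _ ≤ ‖h z‖ + ‖h z - 1‖ := norm_sub_le _ _
    rw [norm_one] at ht
    linarith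
  have hFz : 1 - (1 - Complex.normSq z) * Complex.normSq (h z) ≤ r ^ 2 := by
    have hdz : dist z 0 < δb := by
      rw [dist_zero_right]
      exact lt_of_lt_of_le hzδ (le_trans (min_le_right _ _) (min_le_left _ _))
    have := hδbP hdz
    have hF0 : 1 - (1 - Complex.normSq (0:ℂ)) * Complex.normSq (h 0) = 0 := by
      simp [h0]
    rw [Real.dist_eq, hF0, sub_zero] at this
    exact le_of_lt (lt_of_le_of_lt (le_abs_self _) this)
  have hFpos : ∀ x ∈ closedBall (0:ℂ) δ₁,
      0 ≤ 1 - (1 - Complex.normSq x) * Complex.normSq (h x) := by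
    intro x hx
    have hxb : x ∈ ball (0:ℂ) δ₀ := hδ₁ball hx
    have hx1 : ‖x‖ ≤ 1 / 2 := le_trans (mem_closedBall_zero_iff.1 hx) hδ₁le
    have hdx : (0:ℝ) < 1 - ‖x‖ ^ 2 := by nlinarith [norm_nonneg x]
    have hbx := hbound x hxb
    rw [le_div_iff₀ hdx] at hbx
    rw [hns, hns]
    nlinarith
  -- the key gradient estimate
  set E : ℂ := (starRingEnd ℂ) z * h z - ((1 - Complex.normSq z : ℝ) : ℂ) * deriv h z with hEdef
  have hkey : ‖E‖ ≤ (1 + 7 * K ^ 2) *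
      Real.sqrt (1 - (1 - Complex.normSq z) * Complex.normSq (h z)) := by
    by_cases hE : E = 0
    · rw [hE, norm_zero]
      have := Real.sqrt_nonneg (1 - (1 - Complex.normSq z) * Complex.normSq (h z))
      positivity
    · have hhzne : h z ≠ 0 := by
        intro hc
        rw [hc, norm_zero] at hhzlb
        linarith
      set P : ℂ := (starRingEnd ℂ) (h z) * E with hPdef
      have hPne : P ≠ 0 := mul_ne_zero (by simpa using hhzne) hE
      set v : ℂ := -((starRingEnd ℂ) P) / (‖P‖ : ℂ) with hvdef
      have hv : ‖v‖ = 1 := by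
        have h0' : ‖P‖ ≠ 0 := norm_ne_zero_iff.2 hPne
        rw [hvdef, norm_div, norm_neg, RingHomIsometric.norm_map]
        simp only [Complex.norm_real, Real.norm_eq_abs, _root_.abs_of_nonneg (norm_nonneg P)]
        exact div_self h0'
      have hmemc : ∀ t ∈ Icc (0:ℝ) r, z + t • v ∈ closedBall (0:ℂ) δ₁ := by
        intro t ht
        rw [mem_closedBall_zero_iff]
        calc ‖z + t • v‖ ≤ ‖z‖ + ‖t • v‖ := norm_add_le _ _
          _ = ‖z‖ + |t| * ‖v‖ := by rw [norm_smul, Real.norm_eq_abs]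
          _ = ‖z‖ + t := by rw [hv, _root_.abs_of_nonneg ht.1, mul_one]
          _ ≤ r + r := add_le_add hzr.le ht.2
          _ = δ₁ := by rw [hrdef]; ring
      have hmem : ∀ t ∈ Icc (0:ℝ) r, z + t • v ∈ ball (0:ℂ) δ₀ :=
        fun t ht => hδ₁ball (hmemc t ht)
      have harg1 : ∀ t ∈ Icc (0:ℝ) r, ‖h (z + t • v)‖ ≤ K :=
        fun t ht => hKb1 _ (hmemc t ht)
      have harg2 : ∀ t ∈ Icc (0:ℝ) r, ‖deriv h (z + t • v)‖ ≤ K :=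
        fun t ht => hKb2 _ (hmemc t ht)
      have harg3 : ∀ t ∈ Icc (0:ℝ) r, ‖deriv (deriv h) (z + t • v)‖ ≤ K :=
        fun t ht => hKb3 _ (hmemc t ht)
      have harg4 : ∀ t ∈ Icc (0:ℝ) r, Complex.normSq (z + t • v) ≤ 1 := by
        intro t ht
        rw [hns]
        have h5 := mem_closedBall_zero_iff.1 (hmemc t ht)
        have h6 := norm_nonneg (z + t • v)
        nlinarith
      have harg5 : ∀ t ∈ Icc (0:ℝ) r,
          0 ≤ 1 - (1 - Complex.normSq (z + t • v)) * Complex.normSq (h (z + t • v)) :=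
        fun t ht => hFpos _ (hmemc t ht)
      have harg6 : Real.sqrt (1 - (1 - Complex.normSq z) * Complex.normSq (h z)) ≤ r := by
        have := Real.sqrt_le_sqrt hFz
        rwa [Real.sqrt_sq hr.le] at this
      have hline := line_est h (ball (0:ℂ) δ₀) H1 H2 z v hv r K hr hK hmem
        harg1 harg2 harg3 harg4 harg5 harg6
      -- compute (v * P).re = -‖P‖
      have hvP : v * P = -(‖P‖ : ℂ) := by
        have h0' : (‖P‖ : ℂ) ≠ 0 := by
          simpa using norm_ne_zero_iff.2 hPne
        rw [hvdef, div_mul_eq_mul_div, neg_mul, Complex.conj_mul']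
        rw [neg_div, pow_two, mul_div_assoc, div_self h0', mul_one]
      rw [← hPdef] at hline
      rw [hvP] at hline
      have hre : (-(‖P‖ : ℂ)).re = -‖P‖ := by simp
      rw [hre] at hline
      have hPnorm : ‖P‖ = ‖h z‖ * ‖E‖ := by
        rw [hPdef, norm_mul, RingHomIsometric.norm_map]
      have h2P : ‖E‖ ≤ 2 * ‖P‖ := by
        rw [hPnorm]
        nlinarith [norm_nonneg E]
      calc ‖E‖ ≤ 2 * ‖P‖ := h2P
        _ ≤ (1 + 7 * K ^ 2) * Real.sqrt (1 - (1 - Complex.normSq z) * Complex.normSq (h z)) := by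
            have : -(2 * -‖P‖) = 2 * ‖P‖ := by ring
            linarith [hline]
  -- final assembly
  set T : ℝ := ‖1 - h z * w‖ with hTdef
  have hT0 : 0 ≤ T := norm_nonneg _
  set q : ℝ := Real.sqrt (1 - ‖z‖ ^ 2) with hqdef
  have hq0 : 0 ≤ q := Real.sqrt_nonneg _
  have hq2 : q ^ 2 = 1 - ‖z‖ ^ 2 := Real.sq_sqrt hd1z.le
  have hwq : ‖w‖ ≤ q := by nlinarith [norm_nonneg w]
  have hp1 : ‖h z‖ * q ≤ 1 := by nlinarith [norm_nonneg (h z), mul_nonneg (norm_nonneg (h z)) hq0]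
  have hTlb : 1 - ‖h z‖ * ‖w‖ ≤ T := by
    have := norm_sub_norm_le (1:ℂ) (h z * w)
    rwa [norm_one, norm_mul] at this
  have hu1 : ‖h z‖ * ‖w‖ ≤ 1 :=
    le_trans (mul_le_mul_of_nonneg_left hwq (norm_nonneg _)) hp1
  have hFz2T : 1 - (1 - Complex.normSq z) * Complex.normSq (h z) ≤ 2 * T := by
    rw [hns, hns]
    have hww : ‖h z‖ * ‖w‖ ≤ ‖h z‖ * q := mul_le_mul_of_nonneg_left hwq (norm_nonneg _)
    nlinarith [mul_nonneg (norm_nonneg (h z)) hq0]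
  have hsqT : Real.sqrt (1 - (1 - Complex.normSq z) * Complex.normSq (h z))
      ≤ Real.sqrt 2 * Real.sqrt T := by
    rw [← Real.sqrt_mul (by norm_num : (0:ℝ) ≤ 2) T]
    exact Real.sqrt_le_sqrt hFz2T
  have h2T : (1 - ‖z‖ ^ 2) - ‖w‖ ^ 2 ≤ 2 * T := by
    have step1 : (1 - ‖z‖ ^ 2) - ‖w‖ ^ 2 ≤ 1 - ‖h z‖ ^ 2 * ‖w‖ ^ 2 := by
      nlinarith [sq_nonneg ‖z‖, sq_nonneg ‖w‖, sq_nonneg ‖h z‖, hhb',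
        mul_nonneg (sq_nonneg ‖h z‖) (sq_nonneg ‖w‖)]
    have step2 : 1 - ‖h z‖ ^ 2 * ‖w‖ ^ 2 ≤ 2 * T := by
      nlinarith [hu1, hTlb, mul_nonneg (norm_nonneg (h z)) (norm_nonneg w)]
    linarith
  have hTub : T ≤ 1 + K := by
    have h1 : T ≤ ‖(1:ℂ)‖ + ‖h z * w‖ := norm_sub_le _ _
    rw [norm_one, norm_mul] at h1
    have h2 : ‖h z‖ * ‖w‖ ≤ K * 1 :=
      mul_le_mul (hKb1 z hzcb) hw1 (norm_nonneg _) hK0.le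
    linarith
  have hT_le : T ≤ Real.sqrt (1 + K) * Real.sqrt T := by
    have h1 : Real.sqrt T ≤ Real.sqrt (1 + K) := Real.sqrt_le_sqrt hTub
    calc T = Real.sqrt T * Real.sqrt T := (Real.mul_self_sqrt hT0).symm
      _ ≤ Real.sqrt (1 + K) * Real.sqrt T :=
        mul_le_mul_of_nonneg_right h1 (Real.sqrt_nonneg T)
  -- decompose
  have hdecomp : (starRingEnd ℂ) z * h z - ((‖w‖ : ℂ)) ^ 2 * deriv h z
      = E + ((((1 - Complex.normSq z) - ‖w‖ ^ 2 : ℝ)) : ℂ) * deriv h z := by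
    rw [hEdef]
    push_cast
    ring
  have hcoef : (0:ℝ) ≤ (1 - Complex.normSq z) - ‖w‖ ^ 2 := by
    rw [hns]; nlinarith
  have hLHS : ‖(starRingEnd ℂ) z * h z - ((‖w‖ : ℂ)) ^ 2 * deriv h z‖
      ≤ ‖E‖ + ((1 - ‖z‖ ^ 2) - ‖w‖ ^ 2) * K := by
    rw [hdecomp]
    calc ‖E + ((((1 - Complex.normSq z) - ‖w‖ ^ 2 : ℝ)) : ℂ) * deriv h z‖
        ≤ ‖E‖ + ‖((((1 - Complex.normSq z) - ‖w‖ ^ 2 : ℝ)) : ℂ) * deriv h z‖ := norm_add_le _ _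
      _ = ‖E‖ + ((1 - Complex.normSq z) - ‖w‖ ^ 2) * ‖deriv h z‖ := by
          rw [norm_mul, Complex.norm_real, Real.norm_eq_abs, _root_.abs_of_nonneg hcoef]
      _ ≤ ‖E‖ + ((1 - ‖z‖ ^ 2) - ‖w‖ ^ 2) * K := by
          rw [hns] at *
          exact add_le_add le_rfl
            (mul_le_mul le_rfl (hKb2 z hzcb) (norm_nonneg _) (by linarith))
  -- combine
  have hsT0 : 0 ≤ Real.sqrt T := Real.sqrt_nonneg T
  calc ‖(starRingEnd ℂ) z * h z - ((‖w‖ : ℂ)) ^ 2 * deriv h z‖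
      ≤ ‖E‖ + ((1 - ‖z‖ ^ 2) - ‖w‖ ^ 2) * K := hLHS
    _ ≤ (1 + 7 * K ^ 2) * (Real.sqrt 2 * Real.sqrt T) + (2 * T) * K := by
        apply add_le_add
        · exact le_trans hkey (mul_le_mul_of_nonneg_left hsqT (by positivity))
        · exact mul_le_mul_of_nonneg_right h2T hK0.le
    _ ≤ (1 + 7 * K ^ 2) * (Real.sqrt 2 * Real.sqrt T)
        + 2 * K * (Real.sqrt (1 + K) * Real.sqrt T) := by
        have := mul_le_mul_of_nonneg_right hT_le (by linarith : (0:ℝ) ≤ 2 * K)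
        nlinarith [hT_le, hK0]
    _ = ((1 + 7 * K ^ 2) * Real.sqrt 2 + 2 * K * Real.sqrt (1 + K)) * Real.sqrt T := by ring
end

section
/- For ε > 0 small, the one-dimensional integral ∫₀^ε (1−r)² x / (1 − r² + r² x⁴)^{5/2} dx remains bounded as r → 1⁻; i.e., sup_{r ∈ (1/2, 1)} ∫₀^ε (1−r)² x (1 − r² + r² x⁴)^{−5/2} dx < ∞. -/
open MeasureTheory

lemma aux_integral (a b c : ℝ) (ha : 0 < a) (hb : 0 < b) (ε : ℝ) (hε : 0 < ε) :
    (∫ x in Set.Ioo (0:ℝ) ε, c * x / (a + b * x ^ 4) ^ ((5:ℝ) / 2))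
      = c * (ε ^ 2 * (3 * a + 2 * b * ε ^ 4)) * (6 * a ^ 2)⁻¹
          * (a + b * ε ^ 4) ^ (-(3:ℝ) / 2) := by
  have hP : ∀ x : ℝ, 0 < a + b * x ^ 4 := fun x => by positivity
  set f : ℝ → ℝ := fun x => c * x / (a + b * x ^ 4) ^ ((5:ℝ) / 2) with hf
  set g : ℝ → ℝ := fun x =>
    c * (x ^ 2 * (3 * a + 2 * b * x ^ 4)) * (6 * a ^ 2)⁻¹ * (a + b * x ^ 4) ^ (-(3:ℝ) / 2) with hg
  have hderiv : ∀ x ∈ Set.uIcc (0:ℝ) ε, HasDerivAt g (f x) x := by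
    intro x _
    have hPx := hP x
    have h1 : HasDerivAt (fun x : ℝ => a + b * x ^ 4) (b * (4 * x ^ 3)) x := by
      simpa using ((hasDerivAt_pow 4 x).const_mul b).const_add a
    have h2 : HasDerivAt (fun x : ℝ => (a + b * x ^ 4) ^ (-(3:ℝ) / 2))
        (b * (4 * x ^ 3) * (-(3:ℝ) / 2) * (a + b * x ^ 4) ^ (-(3:ℝ) / 2 - 1)) x :=
      h1.rpow_const (Or.inl hPx.ne')
    have h3 : HasDerivAt (fun x : ℝ => c * (x ^ 2 * (3 * a + 2 * b * x ^ 4)) * (6 * a ^ 2)⁻¹)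
        (c * (2 * x * (3 * a + 2 * b * x ^ 4) + x ^ 2 * (2 * b * (4 * x ^ 3))) * (6 * a ^ 2)⁻¹) x := by
      have hx2 : HasDerivAt (fun x : ℝ => x ^ 2) (2 * x) x := by simpa using hasDerivAt_pow 2 x
      have hx4 : HasDerivAt (fun x : ℝ => 3 * a + 2 * b * x ^ 4) (2 * b * (4 * x ^ 3)) x := by
        simpa using ((hasDerivAt_pow 4 x).const_mul (2 * b)).const_add (3 * a)
      exact ((hx2.mul hx4).const_mul c).mul_const _
    have : HasDerivAt g _ x := h3.mul h2
    convert this using 1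
    have e1 : (a + b * x ^ 4) ^ (-(3:ℝ) / 2) = ((a + b * x ^ 4) ^ ((3:ℝ) / 2))⁻¹ := by
      rw [show -(3:ℝ)/2 = -((3:ℝ)/2) by norm_num, Real.rpow_neg hPx.le]
    have e2 : (a + b * x ^ 4) ^ (-(3:ℝ) / 2 - 1) = ((a + b * x ^ 4) ^ ((3:ℝ) / 2) * (a + b * x ^ 4))⁻¹ := by
      rw [show -(3:ℝ)/2 - 1 = -((3:ℝ)/2 + 1) by norm_num, Real.rpow_neg hPx.le,
        Real.rpow_add hPx, Real.rpow_one]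
    have e3 : (a + b * x ^ 4) ^ ((5:ℝ) / 2) = (a + b * x ^ 4) ^ ((3:ℝ) / 2) * (a + b * x ^ 4) := by
      rw [show (5:ℝ)/2 = (3:ℝ)/2 + 1 by norm_num, Real.rpow_add hPx, Real.rpow_one]
    have hu : (0:ℝ) < (a + b * x ^ 4) ^ ((3:ℝ) / 2) := Real.rpow_pos_of_pos hPx _
    show c * x / (a + b * x ^ 4) ^ ((5:ℝ) / 2) = _
    rw [e1, e2, e3]
    field_simp
    ring
  have hcont : Continuous f := by
    apply Continuous.div
    · exact (continuous_const.mul continuous_id)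
    · exact (continuous_const.add (continuous_const.mul (continuous_pow 4))).rpow_const
        (fun x => Or.inl (hP x).ne')
    · exact fun x => (Real.rpow_pos_of_pos (hP x) _).ne'
  have hint : IntervalIntegrable f volume 0 ε := hcont.intervalIntegrable 0 ε
  have hFTC := intervalIntegral.integral_eq_sub_of_hasDerivAt hderiv hint
  rw [intervalIntegral.integral_of_le hε.le, MeasureTheory.integral_Ioc_eq_integral_Ioo] at hFTC
  have hg0 : g 0 = 0 := by simp [hg]
  rw [show (∫ x in Set.Ioo (0:ℝ) ε, c * x / (a + b * x ^ 4) ^ ((5:ℝ) / 2))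
      = ∫ x in Set.Ioo (0:ℝ) ε, f x from rfl, hFTC, hg0, sub_zero, hg]

/-- For small `ε > 0`, `∫₀^ε (1-r)² x / (1-r²+r²x⁴)^{5/2} dx` stays bounded as `r → 1⁻`. -/
theorem stmt_7 : ∃ ε₀ > (0:ℝ), ∀ ε : ℝ, 0 < ε → ε ≤ ε₀ →
    ∃ M : ℝ, ∀ r : ℝ, 1 / 2 < r → r < 1 →
      (∫ x in Set.Ioo (0:ℝ) ε,
        (1 - r) ^ 2 * x / (1 - r ^ 2 + r ^ 2 * x ^ 4) ^ ((5:ℝ) / 2)) ≤ M := by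
  refine ⟨1, one_pos, fun ε hε hε1 => ⟨1, fun r hr hr1 => ?_⟩⟩
  have hr0 : (0:ℝ) < r := lt_trans (by norm_num) hr
  have ha : (0:ℝ) < 1 - r ^ 2 := by nlinarith
  have hb : (0:ℝ) < r ^ 2 := by positivity
  rw [show (∫ x in Set.Ioo (0:ℝ) ε,
        (1 - r) ^ 2 * x / (1 - r ^ 2 + r ^ 2 * x ^ 4) ^ ((5:ℝ) / 2))
      = ∫ x in Set.Ioo (0:ℝ) ε,
        (1 - r) ^ 2 * x / ((1 - r ^ 2) + r ^ 2 * x ^ 4) ^ ((5:ℝ) / 2) from rfl,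
    aux_integral (1 - r ^ 2) (r ^ 2) ((1 - r) ^ 2) ha hb ε hε]
  set a : ℝ := 1 - r ^ 2 with ha'
  set t : ℝ := a + r ^ 2 * ε ^ 4 with ht'
  have hPe : 0 < t := by positivity
  have hS0 : 0 < Real.sqrt t := Real.sqrt_pos.2 hPe
  have hS : r * ε ^ 2 ≤ Real.sqrt t := by
    rw [Real.le_sqrt' (by positivity)]
    nlinarith [ha]
  have e1 : t ^ (-(3:ℝ) / 2) = (t * Real.sqrt t)⁻¹ := by
    rw [show -(3:ℝ)/2 = -((3:ℝ)/2) by norm_num, Real.rpow_neg hPe.le,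
      show (3:ℝ)/2 = 1 + 1/2 by norm_num, Real.rpow_add hPe, Real.rpow_one,
      ← Real.sqrt_eq_rpow]
  rw [e1]
  have key : (1 - r) ^ 2 * (ε ^ 2 * (3 * a + 2 * r ^ 2 * ε ^ 4)) * (6 * a ^ 2)⁻¹ * (t * Real.sqrt t)⁻¹
      = (1 - r) ^ 2 * (ε ^ 2 * (3 * a + 2 * r ^ 2 * ε ^ 4)) / (6 * a ^ 2 * (t * Real.sqrt t)) := by
    field_simp
  rw [key, div_le_one (by positivity)]
  have h1 : (1 - r) ^ 2 * 3 ≤ 6 * a ^ 2 * r := by nlinarith [sq_nonneg (1 - r), sq_nonneg (1 + r)]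
  calc (1 - r) ^ 2 * (ε ^ 2 * (3 * a + 2 * r ^ 2 * ε ^ 4))
      ≤ (1 - r) ^ 2 * (ε ^ 2 * (3 * t)) := by
        have hX : 3 * a + 2 * r ^ 2 * ε ^ 4 ≤ 3 * t := by
          rw [ht']
          linarith [mul_nonneg (sq_nonneg r) (pow_nonneg hε.le 4)]
        gcongr
    _ = ((1 - r) ^ 2 * 3) * (ε ^ 2 * t) := by ring
    _ ≤ (6 * a ^ 2 * r) * (ε ^ 2 * t) := by
        apply mul_le_mul_of_nonneg_right h1 (by positivity)
    _ = 6 * a ^ 2 * (t * (r * ε ^ 2)) := by ring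
    _ ≤ 6 * a ^ 2 * (t * Real.sqrt t) := by
        apply mul_le_mul_of_nonneg_left _ (by positivity)
        exact mul_le_mul_of_nonneg_left hS hPe.le
end

section
/- The double integral ∫₀¹ ∫₀^{2π} (1−r)² t / (1 − r² + r² t² (1 − r² cos θ))^{5/2} dθ dt remains bounded as r → 1⁻; i.e., there exists M > 0 such that for all r ∈ (1/2, 1) the integral is at most M. -/
open MeasureTheory Real Set

lemma cont_h (a c : ℝ) (ha : 0 < a) :
    Continuous (fun θ : ℝ => (a^2 + c^2*θ^2) ^ (-(5/2) : ℝ)) := by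
  apply Continuous.rpow_const (by continuity)
  intro x; left; positivity

lemma intOn_h (a c : ℝ) (ha : 0 < a) {s : Set ℝ} {R : ℝ} (hs : s ⊆ Icc (-R) R) :
    IntegrableOn (fun θ : ℝ => (a^2 + c^2*θ^2) ^ (-(5/2) : ℝ)) s := by
  refine (((cont_h a c ha).continuousOn).integrableOn_Icc (a := -R) (b := R)).mono_set hs

lemma J (a c b : ℝ) (ha : 0 < a) (hc : 0 < c) (hb : 0 < b) :
    ∫ θ in Ioo (0:ℝ) b, (a^2 + c^2*θ^2) ^ (-(5/2) : ℝ) ≤ (5/4) / (a^4 * c) := by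
  set θ₀ := a / c with hθ₀def
  have hθ₀ : 0 < θ₀ := div_pos ha hc
  have hsplit : Ioo (0:ℝ) b = (Ioo 0 b ∩ Iic θ₀) ∪ (Ioo 0 b ∩ Ioi θ₀) := by
    ext x; simp only [mem_union, mem_inter_iff, mem_Ioo, mem_Iic, mem_Ioi]
    constructor
    · rintro ⟨h1, h2⟩; rcases le_or_gt x θ₀ with h | h
      · exact Or.inl ⟨⟨h1, h2⟩, h⟩
      · exact Or.inr ⟨⟨h1, h2⟩, h⟩
    · rintro (⟨h, _⟩ | ⟨h, _⟩) <;> exact h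
  have hbound : ∀ s : Set ℝ, s ⊆ Icc (-(b+θ₀)) (b+θ₀) →
      IntegrableOn (fun θ : ℝ => (a^2 + c^2*θ^2) ^ (-(5/2) : ℝ)) s :=
    fun s hs => intOn_h a c ha hs
  rw [hsplit, setIntegral_union]
  · -- bound each piece
    have h1 : ∫ θ in Ioo 0 b ∩ Iic θ₀, (a^2 + c^2*θ^2) ^ (-(5/2) : ℝ) ≤ (a^4*c)⁻¹ := by
      have hle : ∫ θ in Ioo 0 b ∩ Iic θ₀, (a^2 + c^2*θ^2) ^ (-(5/2) : ℝ) ≤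
          ∫ _ in Ioo 0 b ∩ Iic θ₀, (a:ℝ)^(-5 : ℝ) := by
        apply setIntegral_mono_on
        · exact hbound _ (fun x hx => ⟨by nlinarith [hx.1.1, hx.1.2], by nlinarith [hx.1.1, hx.1.2]⟩)
        · exact integrableOn_const ((measure_mono (inter_subset_left.trans Ioo_subset_Icc_self)).trans_lt measure_Icc_lt_top).ne
        · exact (measurableSet_Ioo.inter measurableSet_Iic)
        · intro x hx
          have hx2 : (0:ℝ) ≤ c^2 * x^2 := by positivity
          have : (a:ℝ)^(2:ℕ) ≤ a^2 + c^2*x^2 := by linarith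
          calc (a^2 + c^2*x^2) ^ (-(5/2) : ℝ) ≤ ((a:ℝ)^2) ^ (-(5/2) : ℝ) :=
                rpow_le_rpow_of_nonpos (by positivity) this (by norm_num)
            _ = a ^ (-5 : ℝ) := by
                rw [← Real.rpow_natCast a 2, ← Real.rpow_mul ha.le]; norm_num
      refine hle.trans ?_
      rw [setIntegral_const, smul_eq_mul]
      have hvol : (volume (Ioo 0 b ∩ Iic θ₀)).toReal ≤ θ₀ := by
        have : volume (Ioo 0 b ∩ Iic θ₀) ≤ volume (Ioc 0 θ₀) :=
          measure_mono (fun x hx => ⟨hx.1.1, hx.2⟩)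
        rw [Real.volume_Ioc] at this
        calc (volume (Ioo 0 b ∩ Iic θ₀)).toReal ≤ (ENNReal.ofReal (θ₀ - 0)).toReal :=
              ENNReal.toReal_mono (by simp) this
          _ = θ₀ := by rw [ENNReal.toReal_ofReal (by linarith)]; ring
      have hpos : (0:ℝ) ≤ a ^ (-5 : ℝ) := (rpow_pos_of_pos ha _).le
      calc (volume (Ioo 0 b ∩ Iic θ₀)).toReal * a ^ (-5 : ℝ) ≤ θ₀ * a ^ (-5 : ℝ) :=
            mul_le_mul_of_nonneg_right hvol hpos
        _ = (a^4*c)⁻¹ := by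
            rw [hθ₀def, Real.rpow_neg ha.le, show (5:ℝ) = ((5:ℕ):ℝ) by norm_num,
              Real.rpow_natCast]
            field_simp
    have h2 : ∫ θ in Ioo 0 b ∩ Ioi θ₀, (a^2 + c^2*θ^2) ^ (-(5/2) : ℝ) ≤ (1/4) * (a^4*c)⁻¹ := by
      have hstep : ∫ θ in Ioo 0 b ∩ Ioi θ₀, (a^2 + c^2*θ^2) ^ (-(5/2) : ℝ) ≤
          ∫ θ in Ioi θ₀, c^(-5:ℝ) * θ^(-5 : ℝ) := by
        have hint : IntegrableOn (fun θ : ℝ => c^(-5:ℝ) * θ^(-5 : ℝ)) (Ioi θ₀) :=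
          (integrableOn_Ioi_rpow_of_lt (by norm_num) hθ₀).const_mul _
        have hmono1 : ∫ θ in Ioo 0 b ∩ Ioi θ₀, (a^2 + c^2*θ^2) ^ (-(5/2) : ℝ) ≤
            ∫ θ in Ioo 0 b ∩ Ioi θ₀, c^(-5:ℝ) * θ^(-5 : ℝ) := by
          apply setIntegral_mono_on
          · exact hbound _ (fun x hx => ⟨by nlinarith [hx.1.1, hx.1.2], by nlinarith [hx.1.1, hx.1.2]⟩)
          · exact hint.mono_set inter_subset_right
          · exact (measurableSet_Ioo.inter measurableSet_Ioi)
          · intro x hx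
            have hxpos : 0 < x := hx.1.1
            have hle : c^2*x^2 ≤ a^2 + c^2*x^2 := by nlinarith
            calc (a^2 + c^2*x^2) ^ (-(5/2) : ℝ) ≤ (c^2*x^2) ^ (-(5/2) : ℝ) :=
                  rpow_le_rpow_of_nonpos (by positivity) hle (by norm_num)
              _ = c^(-5:ℝ) * x^(-5 : ℝ) := by
                  rw [Real.mul_rpow (by positivity) (by positivity),
                    ← Real.rpow_natCast c 2, ← Real.rpow_natCast x 2,
                    ← Real.rpow_mul hc.le, ← Real.rpow_mul hxpos.le]
                  norm_num
        refine hmono1.trans ?_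
        apply setIntegral_mono_set hint
        · filter_upwards [ae_restrict_mem measurableSet_Ioi] with x hx
          have : 0 < x := hθ₀.trans hx
          positivity
        · exact HasSubset.Subset.eventuallyLE inter_subset_right
      refine hstep.trans ?_
      rw [MeasureTheory.integral_const_mul, integral_Ioi_rpow_of_lt (by norm_num) hθ₀]
      have : θ₀ ^ ((-5:ℝ) + 1) = (c/a)^4 := by
        rw [show ((-5:ℝ)+1) = -((4:ℕ):ℝ) by norm_num, Real.rpow_neg hθ₀.le, Real.rpow_natCast,
          hθ₀def, ← inv_pow, inv_div]
      rw [this]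
      rw [show (-(5:ℝ)) = -((5:ℕ):ℝ) by norm_num, Real.rpow_neg hc.le, Real.rpow_natCast]
      apply le_of_eq
      field_simp
      ring
    have := add_le_add h1 h2
    have heq : (5:ℝ)/4/(a^4*c) = (a^4*c)⁻¹ + 1/4*(a^4*c)⁻¹ := by
      field_simp
      norm_num
    linarith
  · exact Set.disjoint_left.2 (fun x hx hx' => absurd (mem_Ioi.mp hx'.2) (not_lt.2 (mem_Iic.mp hx.2)))
  · exact measurableSet_Ioo.inter measurableSet_Ioi
  · exact hbound _ (fun x hx => ⟨by nlinarith [hx.1.1, hx.1.2], by nlinarith [hx.1.1, hx.1.2]⟩)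
  · exact hbound _ (fun x hx => ⟨by nlinarith [hx.1.1, hx.1.2], by nlinarith [hx.1.1, hx.1.2]⟩)

lemma refl_int (f : ℝ → ℝ) (b : ℝ) (hb : 0 ≤ b) :
    ∫ θ in Ioo (0:ℝ) b, f (b - θ) = ∫ θ in Ioo (0:ℝ) b, f θ := by
  rw [← integral_Ioc_eq_integral_Ioo, ← integral_Ioc_eq_integral_Ioo,
    ← intervalIntegral.integral_of_le hb, ← intervalIntegral.integral_of_le hb]
  simpa using intervalIntegral.integral_comp_sub_left f b

lemma sqrt2_ge : (1.4:ℝ) ≤ Real.sqrt 2 := by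
  rw [show (2:ℝ) = 1.4^2 + 0.04 by norm_num]
  nlinarith [Real.sq_sqrt (show (0:ℝ) ≤ 1.4^2 + 0.04 by norm_num),
    Real.sqrt_nonneg (1.4^2 + 0.04)]

lemma cos_lb {θ : ℝ} (h1 : 0 < θ) (h2 : θ < 2*π) :
    2/π^2 * (min θ (2*π - θ))^2 ≤ 1 - Real.cos θ := by
  set m := min θ (2*π - θ) with hm
  have hπ := Real.pi_pos
  have hm0 : 0 < m := lt_min h1 (by linarith)
  have hmπ : m ≤ π := by
    by_contra h
    push_neg at h
    have := min_le_left θ (2*π-θ)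
    have := min_le_right θ (2*π-θ)
    linarith
  have hcos : Real.cos θ = Real.cos m := by
    rcases min_cases θ (2*π-θ) with ⟨he, _⟩ | ⟨he, _⟩
    · rw [hm, he]
    · rw [hm, he, show 2*π - θ = -θ + 2*π by ring, Real.cos_add_two_pi, Real.cos_neg]
  have hsin : m/π ≤ Real.sin (m/2) := by
    have := Real.mul_le_sin (x := m/2) (by linarith) (by linarith)
    calc m/π = 2/π * (m/2) := by ring
      _ ≤ Real.sin (m/2) := this
  have hs : 1 - Real.cos m = 2 * Real.sin (m/2)^2 := by
    have h := Real.cos_two_mul (m/2)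
    rw [show 2*(m/2) = m by ring] at h
    nlinarith [Real.sin_sq_add_cos_sq (m/2)]
  rw [hcos, hs]
  have hsn : 0 ≤ Real.sin (m/2) := Real.sin_nonneg_of_nonneg_of_le_pi (by linarith) (by linarith)
  have : (m/π)^2 ≤ Real.sin (m/2)^2 := by
    apply sq_le_sq' (by nlinarith [div_pos hm0 hπ]) hsin
  calc 2/π^2 * m^2 = 2 * (m/π)^2 := by field_simp
    _ ≤ 2 * Real.sin (m/2)^2 := by linarith

lemma intOn_cont {f : ℝ → ℝ} (hf : Continuous f) (x y : ℝ) :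
    IntegrableOn f (Ioo x y) :=
  (hf.continuousOn.integrableOn_Icc).mono_set Ioo_subset_Icc_self

set_option maxHeartbeats 1000000 in
lemma inner_bound (r t : ℝ) (hr : 1/2 < r) (hr1 : r < 1) (ht0 : 0 < t) (ht1 : t < 1) :
    ∫ θ in Ioo (0:ℝ) (2*π),
      (1-r)^2 * t / (1 - r^2 + r^2*t^2*(1 - r^2*Real.cos θ)) ^ ((5:ℝ)/2) ≤ 20 := by
  have hπ := Real.pi_pos
  set a := Real.sqrt (1-r^2) with hadef
  set c := Real.sqrt 2 / π * (r^2*t) with hcdef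
  have hr0 : 0 < r := by linarith
  have h1r2 : 0 < 1 - r^2 := by nlinarith
  have ha : 0 < a := Real.sqrt_pos.2 h1r2
  have hs2 : 0 < Real.sqrt 2 := Real.sqrt_pos.2 (by norm_num)
  have hc : 0 < c := by positivity
  have ha2 : a^2 = 1-r^2 := Real.sq_sqrt h1r2.le
  have hc2 : c^2 = 2/π^2 * (r^4*t^2) := by
    rw [hcdef, mul_pow, div_pow, Real.sq_sqrt (by norm_num : (0:ℝ) ≤ 2)]
    ring
  have hκ : (0:ℝ) ≤ (1-r)^2*t := by positivity
  clear_value a c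
  set h₁ : ℝ → ℝ := fun θ => (a^2 + c^2*θ^2) ^ (-(5/2) : ℝ) with hh₁
  set h₂ : ℝ → ℝ := fun θ => (a^2 + c^2*(2*π-θ)^2) ^ (-(5/2) : ℝ) with hh₂
  have hI1 : IntegrableOn h₁ (Ioo (0:ℝ) (2*π)) := intOn_cont (cont_h a c ha) _ _
  have hI2 : IntegrableOn h₂ (Ioo (0:ℝ) (2*π)) :=
    intOn_cont ((cont_h a c ha).comp (by continuity)) _ _
  have hg : IntegrableOn (fun θ => (1-r)^2*t * (h₁ θ + h₂ θ)) (Ioo (0:ℝ) (2*π)) :=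
    (hI1.add hI2).const_mul _
  have hmono : ∫ θ in Ioo (0:ℝ) (2*π),
      (1-r)^2 * t / (1 - r^2 + r^2*t^2*(1 - r^2*Real.cos θ)) ^ ((5:ℝ)/2) ≤
      ∫ θ in Ioo (0:ℝ) (2*π), (1-r)^2*t * (h₁ θ + h₂ θ) := by
    apply integral_mono_of_nonneg
    · filter_upwards with θ
      have hcos1 : Real.cos θ ≤ 1 := Real.cos_le_one θ
      have hc1 : (0:ℝ) ≤ 1 - r^2*Real.cos θ := by
        nlinarith [mul_le_mul_of_nonneg_left hcos1 (sq_nonneg r)]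
      have hD0 : (0:ℝ) ≤ 1 - r^2 + r^2*t^2*(1 - r^2*Real.cos θ) := by
        have := mul_nonneg (show (0:ℝ) ≤ r^2*t^2 by positivity) hc1
        linarith
      positivity
    · exact hg
    · filter_upwards [ae_restrict_mem measurableSet_Ioo] with θ hθ
      set m := min θ (2*π - θ) with hmdef
      have hcos := cos_lb hθ.1 hθ.2
      have hcos1 : Real.cos θ ≤ 1 := Real.cos_le_one θ
      have k0 : r^2*(2/π^2*m^2) ≤ r^2*(1-Real.cos θ) :=
        mul_le_mul_of_nonneg_left hcos (sq_nonneg r)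
      have k0b : r^2*(1-Real.cos θ) ≤ 1 - r^2*Real.cos θ := by nlinarith [sq_nonneg r]
      have k1 : r^2*(2/π^2*m^2) ≤ 1 - r^2*Real.cos θ := k0.trans k0b
      have k2 : r^2*t^2*(r^2*(2/π^2*m^2)) ≤ r^2*t^2*(1 - r^2*Real.cos θ) :=
        mul_le_mul_of_nonneg_left k1 (by positivity)
      have hD : a^2 + c^2*m^2 ≤ 1 - r^2 + r^2*t^2*(1 - r^2*Real.cos θ) := by
        have : a^2 + c^2*m^2 = (1-r^2) + r^2*t^2*(r^2*(2/π^2*m^2)) := by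
          rw [ha2, hc2]; ring
        linarith [k2, this.le, this.ge]
      have hDpos : (0:ℝ) < a^2 + c^2*m^2 := by positivity
      have hpow : (a^2 + c^2*m^2) ^ ((5:ℝ)/2) ≤
          (1 - r^2 + r^2*t^2*(1 - r^2*Real.cos θ)) ^ ((5:ℝ)/2) :=
        Real.rpow_le_rpow hDpos.le hD (by norm_num)
      have step1 : (1-r)^2 * t / (1 - r^2 + r^2*t^2*(1 - r^2*Real.cos θ)) ^ ((5:ℝ)/2) ≤
          (1-r)^2*t * ((a^2 + c^2*m^2) ^ (-(5/2) : ℝ)) := by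
        rw [Real.rpow_neg hDpos.le, ← div_eq_mul_inv]
        apply div_le_div_of_nonneg_left hκ (Real.rpow_pos_of_pos hDpos _)
        exact hpow
      refine step1.trans ?_
      apply mul_le_mul_of_nonneg_left _ hκ
      have hn1 : (0:ℝ) ≤ h₁ θ := Real.rpow_nonneg (by positivity) _
      have hn2 : (0:ℝ) ≤ h₂ θ := Real.rpow_nonneg (by positivity) _
      rcases min_cases θ (2*π - θ) with ⟨he, _⟩ | ⟨he, _⟩
      · rw [hmdef, he]; exact le_add_of_nonneg_right hn2
      · rw [hmdef, he]; exact le_add_of_nonneg_left hn1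
  refine hmono.trans ?_
  rw [MeasureTheory.integral_const_mul, integral_add hI1 hI2]
  have hrefl : ∫ θ in Ioo (0:ℝ) (2*π), h₂ θ = ∫ θ in Ioo (0:ℝ) (2*π), h₁ θ := by
    have := refl_int h₁ (2*π) (by positivity)
    simpa [hh₁, hh₂] using this
  rw [hrefl]
  have hJ := J a c (2*π) ha hc (by positivity)
  have ha4c : (0:ℝ) < a^4*c := by positivity
  have key : (1-r)^2*t * ((∫ θ in Ioo (0:ℝ) (2*π), h₁ θ) + ∫ θ in Ioo (0:ℝ) (2*π), h₁ θ) ≤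
      (1-r)^2*t * (2 * ((5/4)/(a^4*c))) := by
    apply mul_le_mul_of_nonneg_left _ hκ
    linarith [hJ]
  refine key.trans ?_
  clear key hmono hrefl hJ hg hI1 hI2 hh₁ hh₂ h₁ h₂
  -- numeric bound
  have ha4 : a^4 = (1-r^2)^2 := by rw [show a^4 = (a^2)^2 by ring, ha2]
  rw [ha4, hcdef]
  have hQ : (0:ℝ) < (1-r^2)^2*(Real.sqrt 2/π*(r^2*t)) := by positivity
  rw [show (1-r)^2*t*(2*(5/4/((1-r^2)^2*(Real.sqrt 2/π*(r^2*t))))) =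
      ((5:ℝ)/2*((1-r)^2*t))/((1-r^2)^2*(Real.sqrt 2/π*(r^2*t))) by ring]
  rw [div_le_iff₀ hQ]
  have hsp : (2/5:ℝ) ≤ Real.sqrt 2/π := by
    rw [div_le_div_iff₀ (by norm_num) hπ]
    linarith [sqrt2_ge, Real.pi_lt_d2]
  have h34 : (3/4:ℝ) ≤ r*(1+r) := by
    nlinarith [mul_nonneg (by linarith : (0:ℝ) ≤ r - 1/2) (by linarith : (0:ℝ) ≤ r + 3/2)]
  have hP : (9/16:ℝ) ≤ (1+r)^2*r^2 := by
    nlinarith [mul_le_mul h34 h34 (by norm_num) (by linarith : (0:ℝ) ≤ r*(1+r))]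
  have hsP : (9/40:ℝ) ≤ (Real.sqrt 2/π)*((1+r)^2*r^2) := by
    have := mul_le_mul hsp hP (by norm_num) ((by norm_num : (0:ℝ) ≤ 2/5).trans hsp)
    linarith
  clear hadef hcdef ha2 hc2 ha hc ha4c ha4 hQ h1r2 hs2
  nlinarith [mul_nonneg (show (0:ℝ) ≤ 20*((Real.sqrt 2/π)*((1+r)^2*r^2)) - 9/2 by linarith) hκ]


/-- `∫₀¹ ∫₀^{2π} (1-r)² t / (1-r²+r²t²(1-r²cos θ))^{5/2} dθ dt` remains bounded as `r → 1⁻`. -/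
theorem stmt_8 : ∃ M > (0:ℝ), ∀ r : ℝ, 1 / 2 < r → r < 1 →
    (∫ t in Set.Ioo (0:ℝ) 1, ∫ θ in Set.Ioo (0:ℝ) (2 * Real.pi),
      (1 - r) ^ 2 * t /
        (1 - r ^ 2 + r ^ 2 * t ^ 2 * (1 - r ^ 2 * Real.cos θ)) ^ ((5:ℝ) / 2)) ≤ M := by
  refine ⟨20, by norm_num, fun r hr hr1 => ?_⟩
  have hr0 : 0 < r := by linarith
  have h1r2 : 0 < 1 - r^2 := by nlinarith
  have hmono : (∫ t in Ioo (0:ℝ) 1, ∫ θ in Ioo (0:ℝ) (2 * Real.pi),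
      (1 - r) ^ 2 * t /
        (1 - r ^ 2 + r ^ 2 * t ^ 2 * (1 - r ^ 2 * Real.cos θ)) ^ ((5:ℝ) / 2)) ≤
      ∫ _ in Ioo (0:ℝ) 1, (20:ℝ) := by
    apply integral_mono_of_nonneg
    · filter_upwards [ae_restrict_mem measurableSet_Ioo] with t ht
      apply setIntegral_nonneg measurableSet_Ioo
      intro θ _
      have hcos1 : Real.cos θ ≤ 1 := Real.cos_le_one θ
      have hc1 : (0:ℝ) ≤ 1 - r^2*Real.cos θ := by
        nlinarith [mul_le_mul_of_nonneg_left hcos1 (sq_nonneg r)]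
      have hD0 : (0:ℝ) ≤ 1 - r^2 + r^2*t^2*(1 - r^2*Real.cos θ) := by
        have := mul_nonneg (show (0:ℝ) ≤ r^2*t^2 by positivity) hc1
        linarith
      have ht0 : (0:ℝ) ≤ t := ht.1.le
      exact div_nonneg (by positivity) (Real.rpow_nonneg hD0 _)
    · exact integrableOn_const measure_Ioo_lt_top.ne
    · filter_upwards [ae_restrict_mem measurableSet_Ioo] with t ht
      exact inner_bound r t hr hr1 ht.1 ht.2
  refine hmono.trans ?_
  rw [setIntegral_const, smul_eq_mul, measureReal_def, Real.volume_Ioo]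
  norm_num
end

section
/- Let γ = (γ₁, γ₂) : (−ε, ε) → 𝕊₂ be a non-constant real-analytic curve in the unit sphere of ℂ² with γ(0) = (0,1), γ₁′(0) ≠ 0, and such that 1 − γ₂(t) = O(γ₁(t)²) as t → 0. Write γ₁(t) = a₁ t + O(t²) with a₁ ≠ 0 and γ₂(t) = 1 + b₂ t² + O(t³). Then b₂ ≠ 0, and consequently the anisotropic distance satisfies d(γ(0), γ(θ)) = |1 − ⟨γ(0), γ(θ)⟩|^{1/2} ≍ |θ| as θ → 0. -/
open Set Filter Topology Asymptotics

lemma bigO_bound' (f : ℝ → ℂ) (n : ℕ) (h : f =O[𝓝 (0:ℝ)] fun t : ℝ => t ^ n) :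
    ∃ C > (0:ℝ), ∃ δ > (0:ℝ), ∀ t : ℝ, |t| < δ → ‖f t‖ ≤ C * |t| ^ n := by
  obtain ⟨C, hC⟩ := h.bound
  rw [Metric.eventually_nhds_iff] at hC
  obtain ⟨δ, hδ, h⟩ := hC
  refine ⟨max C 1, lt_of_lt_of_le one_pos (le_max_right _ _), δ, hδ, fun t ht => ?_⟩
  have h2 := h (y := t) (by simpa [Real.dist_eq] using ht)
  rw [Real.norm_eq_abs, abs_pow] at h2
  exact h2.trans (by gcongr; exact le_max_left _ _)

lemma norm_sq_eq' (z : ℂ) : ‖z‖ ^ 2 = Complex.normSq z := by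
  rw [Complex.sq_norm]

set_option maxHeartbeats 1600000 in
/-- For a non-constant real-analytic curve `γ = (γ₁,γ₂)` in the sphere `𝕊₂` with
`γ(0) = (0,1)`, `γ₁(t) = a₁t + O(t²)` with `a₁ ≠ 0`, `γ₂(t) = 1 + b₂t² + O(t³)`, and
`1 - γ₂ = O(γ₁²)`, one has `b₂ ≠ 0` and the anisotropic distance satisfies
`d(γ(0), γ(θ)) = |1 - ⟨γ(0), γ(θ)⟩|^{1/2} ≍ |θ|` as `θ → 0`. -/
theorem stmt_13 (ε : ℝ) (hε : 0 < ε) (γ : ℝ → ℂ × ℂ)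
    (hsphere : ∀ t ∈ Ioo (-ε) ε, ‖(γ t).1‖ ^ 2 + ‖(γ t).2‖ ^ 2 = 1)
    (hanal : ∀ t ∈ Ioo (-ε) ε, AnalyticAt ℝ γ t)
    (h0 : γ 0 = (0, 1))
    (a₁ b₂ : ℂ) (ha₁ : a₁ ≠ 0)
    (hexp1 : (fun t : ℝ => (γ t).1 - a₁ * (t : ℂ)) =O[𝓝 0] fun t : ℝ => t ^ 2)
    (hexp2 : (fun t : ℝ => (γ t).2 - 1 - b₂ * (t : ℂ) ^ 2) =O[𝓝 0] fun t : ℝ => t ^ 3)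
    (hO : (fun t : ℝ => 1 - (γ t).2) =O[𝓝 0] fun t : ℝ => ((γ t).1) ^ 2) :
    b₂ ≠ 0 ∧
    ∃ c₁ > (0:ℝ), ∃ c₂ > (0:ℝ), ∃ δ > (0:ℝ), ∀ θ : ℝ, |θ| < δ →
      c₁ * |θ| ≤ Real.sqrt ‖1 - ((γ 0).1 * (starRingEnd ℂ) ((γ θ).1)
          + (γ 0).2 * (starRingEnd ℂ) ((γ θ).2))‖ ∧
      Real.sqrt ‖1 - ((γ 0).1 * (starRingEnd ℂ) ((γ θ).1)
          + (γ 0).2 * (starRingEnd ℂ) ((γ θ).2))‖ ≤ c₂ * |θ| := by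
  obtain ⟨C₁, hC₁, δ₁, hδ₁, hg₁⟩ := bigO_bound' _ 2 hexp1
  obtain ⟨C₂, hC₂, δ₂, hδ₂, hg₂⟩ := bigO_bound' _ 3 hexp2
  have ha₁n : 0 < ‖a₁‖ := norm_pos_iff.mpr ha₁
  set c : ℝ := ‖a₁‖ ^ 2 + 2 * b₂.re with hc_def
  set K : ℝ := 2 * ‖a₁‖ * C₁ + C₁ ^ 2 + ‖b₂‖ ^ 2 + 2 * (1 + ‖b₂‖) * C₂ + C₂ ^ 2 + 1
    with hK_def
  have hK : 0 < K := by positivity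
  set δ₀ : ℝ := min δ₁ (min δ₂ (min ε 1)) with hδ₀_def
  have hδ₀ : 0 < δ₀ := lt_min hδ₁ (lt_min hδ₂ (lt_min hε one_pos))
  have key : ∀ t : ℝ, |t| < δ₀ → |c| * t ^ 2 ≤ K * |t| ^ 3 := by
    intro t ht
    have ht1 : |t| < δ₁ := lt_of_lt_of_le ht (min_le_left _ _)
    have ht2 : |t| < δ₂ := lt_of_lt_of_le ht ((min_le_right _ _).trans (min_le_left _ _))
    have htε : |t| < ε :=
      lt_of_lt_of_le ht ((min_le_right _ _).trans ((min_le_right _ _).trans (min_le_left _ _)))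
    have ht_one : |t| ≤ 1 :=
      le_of_lt (lt_of_lt_of_le ht ((min_le_right _ _).trans ((min_le_right _ _).trans
        (min_le_right _ _))))
    have hsph := hsphere t ⟨(abs_lt.mp htε).1, (abs_lt.mp htε).2⟩
    set g1 : ℂ := (γ t).1 - a₁ * (t : ℂ) with hg1_def
    set g2 : ℂ := (γ t).2 - 1 - b₂ * (t : ℂ) ^ 2 with hg2_def
    have e1 : ‖g1‖ ≤ C₁ * |t| ^ 2 := hg₁ t ht1
    have e2 : ‖g2‖ ≤ C₂ * |t| ^ 3 := hg₂ t ht2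
    have h1 : (γ t).1 = a₁ * (t : ℂ) + g1 := by rw [hg1_def]; ring
    have h2 : (γ t).2 = (1 + b₂ * (t : ℂ) ^ 2) + g2 := by rw [hg2_def]; ring
    have exp1 : ‖(γ t).1‖ ^ 2 = ‖a₁‖ ^ 2 * t ^ 2 + Complex.normSq g1
        + 2 * ((a₁ * (t : ℂ)) * (starRingEnd ℂ) g1).re := by
      rw [h1, norm_sq_eq', Complex.normSq_add]
      rw [Complex.normSq_mul, Complex.normSq_ofReal, ← Complex.sq_norm]
      ring
    have hre2 : ((1:ℂ) * (starRingEnd ℂ) (b₂ * (t : ℂ) ^ 2)).re = b₂.re * t ^ 2 := by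
      simp [Complex.mul_re, ← Complex.ofReal_pow]
    have hnsqb : Complex.normSq (b₂ * (t : ℂ) ^ 2) = ‖b₂‖ ^ 2 * t ^ 4 := by
      rw [← Complex.ofReal_pow, Complex.normSq_mul, Complex.normSq_ofReal, ← Complex.sq_norm]
      ring
    have exp2 : ‖(γ t).2‖ ^ 2 = 1 + ‖b₂‖ ^ 2 * t ^ 4 + 2 * (b₂.re * t ^ 2)
        + Complex.normSq g2 + 2 * (((1:ℂ) + b₂ * (t : ℂ) ^ 2) * (starRingEnd ℂ) g2).re := by
      rw [h2, norm_sq_eq', Complex.normSq_add, Complex.normSq_add, hre2, hnsqb]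
      rw [Complex.normSq_one]
    have heq : c * t ^ 2 = -(2 * ((a₁ * (t : ℂ)) * (starRingEnd ℂ) g1).re
        + Complex.normSq g1 + ‖b₂‖ ^ 2 * t ^ 4
        + 2 * (((1:ℂ) + b₂ * (t : ℂ) ^ 2) * (starRingEnd ℂ) g2).re
        + Complex.normSq g2) := by
      rw [exp1, exp2] at hsph
      rw [hc_def]; linarith
    -- bounds on the error terms
    have hta : (0:ℝ) ≤ |t| := abs_nonneg t
    have hA : |((a₁ * (t : ℂ)) * (starRingEnd ℂ) g1).re| ≤ ‖a₁‖ * C₁ * |t| ^ 3 := by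
      calc |((a₁ * (t : ℂ)) * (starRingEnd ℂ) g1).re|
          ≤ ‖(a₁ * (t : ℂ)) * (starRingEnd ℂ) g1‖ := Complex.abs_re_le_norm _
        _ = ‖a₁‖ * |t| * ‖g1‖ := by
            rw [norm_mul, norm_mul, RCLike.norm_conj, Complex.norm_real, Real.norm_eq_abs]
        _ ≤ ‖a₁‖ * |t| * (C₁ * |t| ^ 2) := by
            apply mul_le_mul_of_nonneg_left e1 (by positivity)
        _ = ‖a₁‖ * C₁ * |t| ^ 3 := by ring
    have hB : Complex.normSq g1 ≤ C₁ ^ 2 * |t| ^ 3 := by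
      rw [← norm_sq_eq']
      calc ‖g1‖ ^ 2 ≤ (C₁ * |t| ^ 2) ^ 2 := pow_le_pow_left₀ (norm_nonneg g1) e1 2
        _ = C₁ ^ 2 * |t| ^ 4 := by ring
        _ ≤ C₁ ^ 2 * |t| ^ 3 := by
            apply mul_le_mul_of_nonneg_left
              (pow_le_pow_of_le_one hta ht_one (by norm_num)) (by positivity)
    have hC4 : ‖b₂‖ ^ 2 * t ^ 4 ≤ ‖b₂‖ ^ 2 * |t| ^ 3 := by
      have h4 : t ^ 4 = |t| ^ 4 := by rw [← abs_pow, abs_of_nonneg (by positivity)]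
      rw [h4]
      exact mul_le_mul_of_nonneg_left
        (pow_le_pow_of_le_one hta ht_one (by norm_num)) (by positivity)
    have hD : |(((1:ℂ) + b₂ * (t : ℂ) ^ 2) * (starRingEnd ℂ) g2).re|
        ≤ (1 + ‖b₂‖) * (C₂ * |t| ^ 3) := by
      have hn1 : ‖(1:ℂ) + b₂ * (t : ℂ) ^ 2‖ ≤ 1 + ‖b₂‖ := by
        calc ‖(1:ℂ) + b₂ * (t : ℂ) ^ 2‖ ≤ ‖(1:ℂ)‖ + ‖b₂ * (t : ℂ) ^ 2‖ := norm_add_le _ _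
          _ = 1 + ‖b₂‖ * |t| ^ 2 := by
              rw [norm_one, norm_mul, norm_pow, Complex.norm_real, Real.norm_eq_abs]
          _ ≤ 1 + ‖b₂‖ := by
              have h2le : |t| ^ 2 ≤ 1 := by nlinarith [hta, ht_one]
              nlinarith [mul_le_mul_of_nonneg_left h2le (norm_nonneg b₂)]
      calc |(((1:ℂ) + b₂ * (t : ℂ) ^ 2) * (starRingEnd ℂ) g2).re|
          ≤ ‖((1:ℂ) + b₂ * (t : ℂ) ^ 2) * (starRingEnd ℂ) g2‖ := Complex.abs_re_le_norm _
        _ = ‖(1:ℂ) + b₂ * (t : ℂ) ^ 2‖ * ‖g2‖ := by rw [norm_mul, RCLike.norm_conj]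
        _ ≤ (1 + ‖b₂‖) * (C₂ * |t| ^ 3) :=
            mul_le_mul hn1 e2 (norm_nonneg _) (by positivity)
    have hE : Complex.normSq g2 ≤ C₂ ^ 2 * |t| ^ 3 := by
      rw [← norm_sq_eq']
      calc ‖g2‖ ^ 2 ≤ (C₂ * |t| ^ 3) ^ 2 := pow_le_pow_left₀ (norm_nonneg g2) e2 2
        _ = C₂ ^ 2 * |t| ^ 6 := by ring
        _ ≤ C₂ ^ 2 * |t| ^ 3 := by
            apply mul_le_mul_of_nonneg_left
              (pow_le_pow_of_le_one hta ht_one (by norm_num)) (by positivity)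
    have habs : |c| * t ^ 2 = |c * t ^ 2| := by
      rw [abs_mul, abs_pow, sq_abs]
    rw [habs, heq, abs_neg]
    obtain ⟨hA1, hA2⟩ := abs_le.mp hA
    obtain ⟨hD1, hD2⟩ := abs_le.mp hD
    have ht3 : (0:ℝ) ≤ |t| ^ 3 := by positivity
    rw [abs_le]
    constructor
    have hp1 : (0:ℝ) ≤ C₁ ^ 2 * |t| ^ 3 := by positivity
    have hp2 : (0:ℝ) ≤ ‖b₂‖ ^ 2 * |t| ^ 3 := by positivity
    have hp3 : (0:ℝ) ≤ C₂ ^ 2 * |t| ^ 3 := by positivity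
    have hp4 : (0:ℝ) ≤ ‖b₂‖ ^ 2 * t ^ 4 := by positivity
    · rw [hK_def]
      linarith [Complex.normSq_nonneg g1, Complex.normSq_nonneg g2]
    · rw [hK_def]
      linarith [Complex.normSq_nonneg g1, Complex.normSq_nonneg g2]
  -- c = 0
  have hc0 : c = 0 := by
    by_contra hne
    have hcpos : 0 < |c| := abs_pos.mpr hne
    set t₀ : ℝ := min (δ₀ / 2) (|c| / (2 * K)) with ht₀_def
    have ht₀pos : 0 < t₀ := lt_min (by linarith) (by positivity)
    have ht₀abs : |t₀| = t₀ := abs_of_pos ht₀pos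
    have ht₀δ : |t₀| < δ₀ := by
      rw [ht₀abs]
      exact lt_of_le_of_lt (min_le_left _ _) (by linarith)
    have hk := key t₀ ht₀δ
    rw [ht₀abs] at hk
    have ht₀le : t₀ ≤ |c| / (2 * K) := min_le_right _ _
    have hKt : K * t₀ ≤ |c| / 2 := by
      rw [le_div_iff₀ (by linarith : (0:ℝ) < 2 * K)] at ht₀le
      nlinarith [ht₀le]
    nlinarith [mul_le_mul_of_nonneg_right hKt (sq_nonneg t₀),
      mul_pos hcpos (mul_pos ht₀pos ht₀pos)]
  -- b₂ ≠ 0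
  have hre : b₂.re = -(‖a₁‖ ^ 2) / 2 := by rw [hc_def] at hc0; linarith
  have hblt : b₂.re < 0 := by rw [hre]; nlinarith [ha₁n]
  have hb₂ : b₂ ≠ 0 := by
    intro h
    rw [h] at hblt
    simp at hblt
  have hb₂pos : 0 < ‖b₂‖ := norm_pos_iff.mpr hb₂
  refine ⟨hb₂, Real.sqrt (‖b₂‖ / 2), Real.sqrt_pos.mpr (by positivity),
    Real.sqrt (2 * ‖b₂‖), Real.sqrt_pos.mpr (by positivity),
    min δ₂ (min 1 (‖b₂‖ / (2 * C₂))),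
    lt_min hδ₂ (lt_min one_pos (by positivity)), fun θ hθ => ?_⟩
  have hθ2 : |θ| < δ₂ := lt_of_lt_of_le hθ (min_le_left _ _)
  have hθ1 : |θ| ≤ 1 :=
    le_of_lt (lt_of_lt_of_le hθ ((min_le_right _ _).trans (min_le_left _ _)))
  have hθ3 : C₂ * |θ| ≤ ‖b₂‖ / 2 := by
    have := lt_of_lt_of_le hθ ((min_le_right _ _).trans (min_le_right _ _))
    rw [lt_div_iff₀ (by positivity)] at this
    nlinarith [abs_nonneg θ]
  have e2 : ‖(γ θ).2 - 1 - b₂ * (θ : ℂ) ^ 2‖ ≤ C₂ * |θ| ^ 3 := hg₂ θ hθ2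
  have hnorm : ‖1 - ((γ 0).1 * (starRingEnd ℂ) ((γ θ).1)
      + (γ 0).2 * (starRingEnd ℂ) ((γ θ).2))‖ = ‖1 - (γ θ).2‖ := by
    rw [h0]
    have : (1:ℂ) - ((0:ℂ) * (starRingEnd ℂ) ((γ θ).1) + (1:ℂ) * (starRingEnd ℂ) ((γ θ).2))
        = (starRingEnd ℂ) (1 - (γ θ).2) := by
      rw [map_sub, map_one]; ring
    simpa [this] using (RCLike.norm_conj (1 - (γ θ).2))
  rw [hnorm]
  have hnb : ‖b₂ * (θ : ℂ) ^ 2‖ = ‖b₂‖ * θ ^ 2 := by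
    rw [norm_mul, norm_pow, Complex.norm_real, Real.norm_eq_abs, sq_abs]
  have hrw : (1:ℂ) - (γ θ).2
      = -(b₂ * (θ : ℂ) ^ 2 + ((γ θ).2 - 1 - b₂ * (θ : ℂ) ^ 2)) := by ring
  have hθ33 : |θ| ^ 3 = θ ^ 2 * |θ| := by
    rw [pow_succ, sq_abs]
  have hC2θ : C₂ * |θ| ^ 3 ≤ ‖b₂‖ / 2 * θ ^ 2 := by
    rw [hθ33]
    nlinarith [sq_nonneg θ, abs_nonneg θ]
  have htri1 : ‖b₂ * (θ : ℂ) ^ 2‖ - ‖(γ θ).2 - 1 - b₂ * (θ : ℂ) ^ 2‖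
      ≤ ‖b₂ * (θ : ℂ) ^ 2 + ((γ θ).2 - 1 - b₂ * (θ : ℂ) ^ 2)‖ := by
    have h := norm_sub_norm_le (b₂ * (θ : ℂ) ^ 2) (-((γ θ).2 - 1 - b₂ * (θ : ℂ) ^ 2))
    rw [sub_neg_eq_add, norm_neg] at h
    exact h
  have htri2 : ‖b₂ * (θ : ℂ) ^ 2 + ((γ θ).2 - 1 - b₂ * (θ : ℂ) ^ 2)‖
      ≤ ‖b₂ * (θ : ℂ) ^ 2‖ + ‖(γ θ).2 - 1 - b₂ * (θ : ℂ) ^ 2‖ := norm_add_le _ _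
  have hl : ‖b₂‖ / 2 * θ ^ 2 ≤ ‖(1:ℂ) - (γ θ).2‖ := by
    rw [hrw, norm_neg]
    linarith [hnb, e2, hC2θ, htri1]
  have hu : ‖(1:ℂ) - (γ θ).2‖ ≤ 2 * ‖b₂‖ * θ ^ 2 := by
    rw [hrw, norm_neg]
    nlinarith [hnb, e2, hC2θ, htri2, sq_nonneg θ, hb₂pos]
  have hs1 : Real.sqrt (‖b₂‖ / 2 * θ ^ 2) = Real.sqrt (‖b₂‖ / 2) * |θ| := by
    rw [Real.sqrt_mul (by positivity : (0:ℝ) ≤ ‖b₂‖ / 2), Real.sqrt_sq_eq_abs]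
  have hs2 : Real.sqrt (2 * ‖b₂‖ * θ ^ 2) = Real.sqrt (2 * ‖b₂‖) * |θ| := by
    rw [Real.sqrt_mul (by positivity : (0:ℝ) ≤ 2 * ‖b₂‖), Real.sqrt_sq_eq_abs]
  constructor
  · rw [← hs1]
    exact Real.sqrt_le_sqrt hl
  · have h := Real.sqrt_le_sqrt hu
    rw [hs2] at h
    exact h
end

section
/- Let h be holomorphic near 0 in ℂ with h(z) = 1 + γz² + o(z²), |γ| ≤ 1/2, and |h(z)|² ≤ 1/(1−|z|²) near 0. For r ∈ (0,1) define H_r(z,w) = (1 − h(z)w)/(1 − r h(rz) w). Then there is a constant C > 0, independent of r, such that for all (z,w) ∈ 𝔹₂ with z near 0: |1 − H_r(z,w)| ≤ C(1−r)/|1 − r h(rz)w| ≤ C, and |∂_z H_r(z,w)| ≤ C(1−r)/|1 − r h(rz)w|³ and |∂_w H_r(z,w)| ≤ C(1−r)/|1 − r h(rz)w|³. -/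
open Metric Filter Topology Asymptotics

private lemma aux_div (n d K c s : ℝ) (hn : 0 ≤ n) (hnK : n ≤ K * s) (hd2 : d ≤ 2)
    (hd0 : 0 < d) (hK : 0 ≤ K) (hs : 0 ≤ s) (hKc : 2 * K ≤ c) :
    n / d ^ 2 ≤ c * s / d ^ 3 := by
  have hrw : n / d ^ 2 = n * d / d ^ 3 := by
    field_simp
  rw [hrw]
  apply div_le_div_of_nonneg_right _ (by positivity)
  calc n * d ≤ K * s * 2 := mul_le_mul hnK hd2 hd0.le (mul_nonneg hK hs)
    _ ≤ c * s := by nlinarith [mul_nonneg (sub_nonneg.mpr hKc) hs]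

set_option maxHeartbeats 1000000 in
/-- For `h` holomorphic near `0` with `h(z) = 1 + γz² + o(z²)`, `|γ| ≤ 1/2`, and
`|h(z)|² ≤ 1/(1-|z|²)` near `0`, the functions `H_r(z,w) = (1-h(z)w)/(1-rh(rz)w)` satisfy,
uniformly in `r ∈ (0,1)`, for `(z,w) ∈ 𝔹₂` with `z` near `0`:
`|1 - H_r| ≤ C(1-r)/|1-rh(rz)w| ≤ C`, `|∂_z H_r| ≤ C(1-r)/|1-rh(rz)w|³`, and
`|∂_w H_r| ≤ C(1-r)/|1-rh(rz)w|³`. -/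
theorem stmt_17 (h : ℂ → ℂ) (γ : ℂ) (hγ : ‖γ‖ ≤ 1 / 2)
    (δ₀ : ℝ) (hδ₀ : 0 < δ₀) (hhol : DifferentiableOn ℂ h (ball 0 δ₀))
    (hexp : (fun z => h z - 1 - γ * z ^ 2) =o[𝓝 0] fun z : ℂ => z ^ 2)
    (hbound : ∀ z ∈ ball (0:ℂ) δ₀, ‖h z‖ ^ 2 ≤ 1 / (1 - ‖z‖ ^ 2)) :
    ∃ C > (0:ℝ), ∃ δ > (0:ℝ), ∀ r : ℝ, 0 < r → r < 1 → ∀ z w : ℂ,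
      ‖z‖ ^ 2 + ‖w‖ ^ 2 < 1 → ‖z‖ < δ →
      (‖1 - (1 - h z * w) / (1 - (r:ℂ) * h ((r:ℂ) * z) * w)‖
          ≤ C * (1 - r) / ‖1 - (r:ℂ) * h ((r:ℂ) * z) * w‖ ∧
        C * (1 - r) / ‖1 - (r:ℂ) * h ((r:ℂ) * z) * w‖ ≤ C) ∧
      ‖deriv (fun z' : ℂ => (1 - h z' * w) / (1 - (r:ℂ) * h ((r:ℂ) * z') * w)) z‖
        ≤ C * (1 - r) / ‖1 - (r:ℂ) * h ((r:ℂ) * z) * w‖ ^ 3 ∧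
      ‖deriv (fun w' : ℂ => (1 - h z * w') / (1 - (r:ℂ) * h ((r:ℂ) * z) * w')) w‖
        ≤ C * (1 - r) / ‖1 - (r:ℂ) * h ((r:ℂ) * z) * w‖ ^ 3 := by
  -- choose δ
  set δ : ℝ := min (δ₀ / 2) (1 / 2) with hδdef
  have hδpos : 0 < δ := lt_min (by linarith) (by norm_num)
  have hδhalf : δ ≤ 1 / 2 := min_le_right _ _
  have hδδ₀ : δ < δ₀ := lt_of_le_of_lt (min_le_left _ _) (by linarith)
  have hsub : closedBall (0:ℂ) δ ⊆ ball (0:ℂ) δ₀ := closedBall_subset_ball hδδ₀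
  -- analyticity, derivatives bounded on closedBall
  have hA : AnalyticOnNhd ℂ h (ball 0 δ₀) := hhol.analyticOnNhd isOpen_ball
  have hA1 : AnalyticOnNhd ℂ (deriv h) (ball 0 δ₀) := hA.deriv
  have hA2 : AnalyticOnNhd ℂ (deriv (deriv h)) (ball 0 δ₀) := hA1.deriv
  obtain ⟨M₀, hM₀⟩ := (isCompact_closedBall (0:ℂ) δ).exists_bound_of_continuousOn
    ((hA.continuousOn).mono hsub)
  obtain ⟨M₁, hM₁⟩ := (isCompact_closedBall (0:ℂ) δ).exists_bound_of_continuousOn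
    ((hA1.continuousOn).mono hsub)
  obtain ⟨M₂, hM₂⟩ := (isCompact_closedBall (0:ℂ) δ).exists_bound_of_continuousOn
    ((hA2.continuousOn).mono hsub)
  have h0 : (0:ℂ) ∈ closedBall (0:ℂ) δ := by simp [hδpos.le]
  have hM₀0 : 0 ≤ M₀ := le_trans (norm_nonneg _) (hM₀ 0 h0)
  have hM₁0 : 0 ≤ M₁ := le_trans (norm_nonneg _) (hM₁ 0 h0)
  have hM₂0 : 0 ≤ M₂ := le_trans (norm_nonneg _) (hM₂ 0 h0)
  -- Lipschitz estimates
  have lipH : ∀ x ∈ closedBall (0:ℂ) δ, ∀ y ∈ closedBall (0:ℂ) δ,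
      ‖h y - h x‖ ≤ M₁ * ‖y - x‖ := fun x hx y hy =>
    Convex.norm_image_sub_le_of_norm_deriv_le
      (fun u hu => (hA u (hsub hu)).differentiableAt) hM₁ (convex_closedBall _ _) hx hy
  have lipH' : ∀ x ∈ closedBall (0:ℂ) δ, ∀ y ∈ closedBall (0:ℂ) δ,
      ‖deriv h y - deriv h x‖ ≤ M₂ * ‖y - x‖ := fun x hx y hy =>
    Convex.norm_image_sub_le_of_norm_deriv_le
      (fun u hu => (hA1 u (hsub hu)).differentiableAt) hM₂ (convex_closedBall _ _) hx hy
  set C₁ : ℝ := M₁ + M₀ with hC₁def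
  set C₂ : ℝ := M₂ + 2 * M₁ with hC₂def
  have hC₁0 : 0 ≤ C₁ := by positivity
  have hC₂0 : 0 ≤ C₂ := by positivity
  refine ⟨2 * (2 * C₂ + M₁ * C₁) + 2 * C₁ + 1, by positivity, δ, hδpos, ?_⟩
  set C : ℝ := 2 * (2 * C₂ + M₁ * C₁) + 2 * C₁ + 1 with hCdef
  have hC0 : 0 < C := by positivity
  intro r hr0 hr1 z w hzw hzδ
  have hrn : ‖(r:ℂ)‖ = r := by rw [Complex.norm_real, Real.norm_of_nonneg hr0.le]
  have h1r : (0:ℝ) ≤ 1 - r := by linarith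
  have hw1 : ‖w‖ ≤ 1 := by nlinarith [norm_nonneg w, norm_nonneg z, sq_nonneg ‖z‖]
  have hzc : z ∈ closedBall (0:ℂ) δ := by simpa using hzδ.le
  have hrz : ‖(r:ℂ) * z‖ ≤ ‖z‖ := by
    rw [norm_mul, hrn]; nlinarith [norm_nonneg z]
  have hrzc : ((r:ℂ) * z) ∈ closedBall (0:ℂ) δ := by
    simp only [mem_closedBall, dist_zero_right]
    exact le_trans hrz hzδ.le
  have hzball : z ∈ ball (0:ℂ) δ₀ := hsub hzc
  have hrzball : ((r:ℂ) * z) ∈ ball (0:ℂ) δ₀ := hsub hrzc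
  -- bound on the denominator
  have ht : (0:ℝ) < 1 - ‖z‖ ^ 2 := by nlinarith [sq_nonneg ‖w‖]
  have hw2 : ‖w‖ ^ 2 ≤ 1 - ‖z‖ ^ 2 := by nlinarith
  have hhrz2 : ‖h ((r:ℂ) * z)‖ ^ 2 ≤ 1 / (1 - ‖z‖ ^ 2) := by
    refine le_trans (hbound _ hrzball) ?_
    apply one_div_le_one_div_of_le ht
    nlinarith [norm_nonneg ((r:ℂ) * z), norm_nonneg z]
  have hbw : ‖h ((r:ℂ) * z) * w‖ ≤ 1 := by
    rw [norm_mul]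
    have key : ‖h ((r:ℂ) * z)‖ ^ 2 * ‖w‖ ^ 2 ≤ 1 := by
      have := mul_le_mul hhrz2 hw2 (sq_nonneg _) (by positivity)
      calc ‖h ((r:ℂ) * z)‖ ^ 2 * ‖w‖ ^ 2 ≤ 1 / (1 - ‖z‖ ^ 2) * (1 - ‖z‖ ^ 2) := this
        _ = 1 := one_div_mul_cancel ht.ne'
    have key2 : (‖h ((r:ℂ) * z)‖ * ‖w‖) ^ 2 ≤ 1 ^ 2 := by rw [mul_pow]; simpa using key
    exact le_of_pow_le_pow_left₀ two_ne_zero (by norm_num) key2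
  set D : ℂ := 1 - (r:ℂ) * h ((r:ℂ) * z) * w with hDdef
  have hrbw : ‖(r:ℂ) * h ((r:ℂ) * z) * w‖ ≤ r := by
    rw [mul_assoc, norm_mul, hrn]
    exact le_trans (mul_le_mul_of_nonneg_left hbw hr0.le) (by linarith)
  have hDlb : 1 - r ≤ ‖D‖ := by
    have := norm_sub_norm_le (1:ℂ) ((r:ℂ) * h ((r:ℂ) * z) * w)
    simp only [norm_one] at this
    linarith
  have hDub : ‖D‖ ≤ 2 := by
    have := norm_sub_le (1:ℂ) ((r:ℂ) * h ((r:ℂ) * z) * w)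
    simp only [norm_one] at this
    linarith
  have hDpos : 0 < ‖D‖ := by linarith
  have hDne : D ≠ 0 := by intro h'; rw [h'] at hDpos; simp at hDpos
  -- difference bounds
  have hab : ‖h z - (r:ℂ) * h ((r:ℂ) * z)‖ ≤ C₁ * (1 - r) := by
    have e1 : ‖h z - h ((r:ℂ) * z)‖ ≤ M₁ * (1 - r) := by
      have := lipH _ hrzc _ hzc
      have hnz : ‖z - (r:ℂ) * z‖ = (1 - r) * ‖z‖ := by
        have : z - (r:ℂ) * z = ((1:ℂ) - (r:ℂ)) * z := by ring
        rw [this, norm_mul]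
        congr 1
        rw [show ((1:ℂ) - (r:ℂ)) = ((1 - r : ℝ) : ℂ) by push_cast; ring,
          Complex.norm_real, Real.norm_of_nonneg (by linarith)]
      rw [hnz] at this
      refine le_trans this ?_
      have hz1 : ‖z‖ ≤ 1 := by linarith [hzδ.le.trans hδhalf]
      calc M₁ * ((1 - r) * ‖z‖) ≤ M₁ * ((1 - r) * 1) :=
            mul_le_mul_of_nonneg_left (mul_le_mul_of_nonneg_left hz1 h1r) hM₁0
        _ = M₁ * (1 - r) := by ring
    have e2 : ‖((1:ℂ) - (r:ℂ)) * h ((r:ℂ) * z)‖ ≤ M₀ * (1 - r) := by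
      rw [norm_mul, show ((1:ℂ) - (r:ℂ)) = ((1 - r : ℝ) : ℂ) by push_cast; ring,
        Complex.norm_real, Real.norm_of_nonneg (by linarith)]
      have := hM₀ _ hrzc
      nlinarith
    calc ‖h z - (r:ℂ) * h ((r:ℂ) * z)‖
        = ‖(h z - h ((r:ℂ) * z)) + ((1:ℂ) - (r:ℂ)) * h ((r:ℂ) * z)‖ := by ring_nf
      _ ≤ ‖h z - h ((r:ℂ) * z)‖ + ‖((1:ℂ) - (r:ℂ)) * h ((r:ℂ) * z)‖ := norm_add_le _ _
      _ ≤ M₁ * (1 - r) + M₀ * (1 - r) := by linarith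
      _ = C₁ * (1 - r) := by ring
  have hab2 : ‖deriv h z - (r:ℂ) ^ 2 * deriv h ((r:ℂ) * z)‖ ≤ C₂ * (1 - r) := by
    have e1 : ‖deriv h z - deriv h ((r:ℂ) * z)‖ ≤ M₂ * (1 - r) := by
      have := lipH' _ hrzc _ hzc
      have hnz : ‖z - (r:ℂ) * z‖ = (1 - r) * ‖z‖ := by
        have : z - (r:ℂ) * z = ((1:ℂ) - (r:ℂ)) * z := by ring
        rw [this, norm_mul]
        congr 1
        rw [show ((1:ℂ) - (r:ℂ)) = ((1 - r : ℝ) : ℂ) by push_cast; ring,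
          Complex.norm_real, Real.norm_of_nonneg (by linarith)]
      rw [hnz] at this
      refine le_trans this ?_
      have hz1 : ‖z‖ ≤ 1 := by linarith [hzδ.le.trans hδhalf]
      calc M₂ * ((1 - r) * ‖z‖) ≤ M₂ * ((1 - r) * 1) :=
            mul_le_mul_of_nonneg_left (mul_le_mul_of_nonneg_left hz1 h1r) hM₂0
        _ = M₂ * (1 - r) := by ring
    have e2 : ‖((1:ℂ) - (r:ℂ) ^ 2) * deriv h ((r:ℂ) * z)‖ ≤ 2 * M₁ * (1 - r) := by
      rw [norm_mul, show ((1:ℂ) - (r:ℂ) ^ 2) = ((1 - r ^ 2 : ℝ) : ℂ) by push_cast; ring,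
        Complex.norm_real, Real.norm_of_nonneg (by nlinarith)]
      calc (1 - r ^ 2) * ‖deriv h ((r:ℂ) * z)‖ ≤ (1 - r ^ 2) * M₁ :=
            mul_le_mul_of_nonneg_left (hM₁ _ hrzc) (by nlinarith)
        _ ≤ 2 * M₁ * (1 - r) := by nlinarith [mul_nonneg hM₁0 (sq_nonneg (1 - r))]
    calc ‖deriv h z - (r:ℂ) ^ 2 * deriv h ((r:ℂ) * z)‖
        = ‖(deriv h z - deriv h ((r:ℂ) * z)) + ((1:ℂ) - (r:ℂ) ^ 2) * deriv h ((r:ℂ) * z)‖ := by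
          ring_nf
      _ ≤ ‖deriv h z - deriv h ((r:ℂ) * z)‖ + ‖((1:ℂ) - (r:ℂ) ^ 2) * deriv h ((r:ℂ) * z)‖ :=
          norm_add_le _ _
      _ ≤ M₂ * (1 - r) + 2 * M₁ * (1 - r) := by linarith
      _ = C₂ * (1 - r) := by ring
  have hCC1 : C₁ ≤ C := by nlinarith
  have hCC1' : 2 * C₁ ≤ C := by nlinarith
  have hCC2 : 2 * (2 * C₂ + M₁ * C₁) ≤ C := by nlinarith
  refine ⟨⟨?_, ?_⟩, ?_, ?_⟩
  · -- first bound
    have key : 1 - (1 - h z * w) / D = (h z - (r:ℂ) * h ((r:ℂ) * z)) * w / D := by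
      field_simp
      ring
    rw [key, norm_div]
    gcongr
    rw [norm_mul]
    calc ‖h z - (r:ℂ) * h ((r:ℂ) * z)‖ * ‖w‖ ≤ C₁ * (1 - r) * 1 :=
          mul_le_mul hab hw1 (norm_nonneg _) (mul_nonneg hC₁0 h1r)
      _ ≤ C * (1 - r) := by nlinarith [mul_nonneg (sub_nonneg.mpr hCC1) h1r]
  · -- second bound
    rw [div_le_iff₀ hDpos]
    exact mul_le_mul_of_nonneg_left hDlb hC0.le
  · -- z-derivative
    have hhz : HasDerivAt h (deriv h z) z := ((hA z hzball).differentiableAt).hasDerivAt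
    have hhrz : HasDerivAt h (deriv h ((r:ℂ) * z)) ((r:ℂ) * z) :=
      ((hA _ hrzball).differentiableAt).hasDerivAt
    have hinner : HasDerivAt (fun z' : ℂ => (r:ℂ) * z') ((r:ℂ)) z := by
      simpa using (hasDerivAt_id z).const_mul (r:ℂ)
    have hcomp : HasDerivAt (fun z' : ℂ => h ((r:ℂ) * z')) (deriv h ((r:ℂ) * z) * (r:ℂ)) z :=
      HasDerivAt.comp z hhrz hinner
    have hN : HasDerivAt (fun z' : ℂ => 1 - h z' * w) (-(deriv h z * w)) z :=
      (hhz.mul_const w).const_sub 1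
    have hD : HasDerivAt (fun z' : ℂ => 1 - (r:ℂ) * h ((r:ℂ) * z') * w)
        (-((r:ℂ) * (deriv h ((r:ℂ) * z) * (r:ℂ)) * w)) z :=
      ((hcomp.const_mul (r:ℂ)).mul_const w).const_sub 1
    have hQ : HasDerivAt (fun z' : ℂ => (1 - h z' * w) / (1 - (r:ℂ) * h ((r:ℂ) * z') * w)) _ z :=
      hN.div hD hDne
    rw [hQ.deriv]
    set dz := deriv h z
    set drz := deriv h ((r:ℂ) * z)
    have hNUMeq : -(dz * w) * (1 - (r:ℂ) * h ((r:ℂ) * z) * w)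
          - (1 - h z * w) * -((r:ℂ) * (drz * (r:ℂ)) * w)
        = -w * ((dz - (r:ℂ) ^ 2 * drz) * D
            + (r:ℂ) ^ 2 * drz * ((h z - (r:ℂ) * h ((r:ℂ) * z)) * w)) := by
      rw [hDdef]; ring
    have hdrz : ‖(r:ℂ) ^ 2 * drz‖ ≤ M₁ := by
      rw [norm_mul, norm_pow, hrn]
      calc r ^ 2 * ‖drz‖ ≤ 1 * ‖drz‖ :=
            mul_le_mul_of_nonneg_right (by nlinarith [sq_nonneg (1 - r)]) (norm_nonneg _)
        _ ≤ M₁ := by rw [one_mul]; exact hM₁ _ hrzc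
    have hNUMle : ‖-w * ((dz - (r:ℂ) ^ 2 * drz) * D
        + (r:ℂ) ^ 2 * drz * ((h z - (r:ℂ) * h ((r:ℂ) * z)) * w))‖
        ≤ (2 * C₂ + M₁ * C₁) * (1 - r) := by
      rw [norm_mul, norm_neg]
      have e1 : ‖(dz - (r:ℂ) ^ 2 * drz) * D‖ ≤ C₂ * (1 - r) * 2 := by
        rw [norm_mul]
        exact mul_le_mul hab2 hDub (norm_nonneg _) (mul_nonneg hC₂0 h1r)
      have e2 : ‖(r:ℂ) ^ 2 * drz * ((h z - (r:ℂ) * h ((r:ℂ) * z)) * w)‖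
          ≤ M₁ * (C₁ * (1 - r)) := by
        rw [norm_mul]
        refine mul_le_mul hdrz ?_ (norm_nonneg _) hM₁0
        rw [norm_mul]
        calc ‖h z - (r:ℂ) * h ((r:ℂ) * z)‖ * ‖w‖ ≤ C₁ * (1 - r) * 1 :=
            mul_le_mul hab hw1 (norm_nonneg _) (mul_nonneg hC₁0 h1r)
          _ = C₁ * (1 - r) := by ring
      have e3 := norm_add_le ((dz - (r:ℂ) ^ 2 * drz) * D)
        ((r:ℂ) ^ 2 * drz * ((h z - (r:ℂ) * h ((r:ℂ) * z)) * w))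
      calc ‖w‖ * ‖(dz - (r:ℂ) ^ 2 * drz) * D
            + (r:ℂ) ^ 2 * drz * ((h z - (r:ℂ) * h ((r:ℂ) * z)) * w)‖
          ≤ 1 * ((2 * C₂ + M₁ * C₁) * (1 - r)) := by
            apply mul_le_mul hw1 _ (norm_nonneg _) (by norm_num)
            calc _ ≤ _ := e3
              _ ≤ (2 * C₂ + M₁ * C₁) * (1 - r) := by linarith
        _ = (2 * C₂ + M₁ * C₁) * (1 - r) := by ring
    rw [norm_div, hNUMeq, norm_pow]
    exact aux_div _ _ _ _ _ (norm_nonneg _) hNUMle hDub hDpos (by positivity) h1r hCC2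
  · -- w-derivative
    have hNw : HasDerivAt (fun w' : ℂ => 1 - h z * w') (-(h z)) w := by
      simpa using ((hasDerivAt_id w).const_mul (h z)).const_sub (1:ℂ)
    have hDw : HasDerivAt (fun w' : ℂ => 1 - (r:ℂ) * h ((r:ℂ) * z) * w')
        (-((r:ℂ) * h ((r:ℂ) * z))) w := by
      simpa using ((hasDerivAt_id w).const_mul ((r:ℂ) * h ((r:ℂ) * z))).const_sub (1:ℂ)
    have hQ : HasDerivAt (fun w' : ℂ => (1 - h z * w') / (1 - (r:ℂ) * h ((r:ℂ) * z) * w')) _ w :=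
      hNw.div hDw hDne
    rw [hQ.deriv]
    have hnum : -(h z) * (1 - (r:ℂ) * h ((r:ℂ) * z) * w)
        - (1 - h z * w) * -((r:ℂ) * h ((r:ℂ) * z))
        = -(h z - (r:ℂ) * h ((r:ℂ) * z)) := by ring
    rw [norm_div, hnum, norm_neg, norm_pow]
    exact aux_div _ _ _ _ _ (norm_nonneg _) hab hDub hDpos hC₁0 h1r hCC1'
end
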